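/- arXiv:math-ph/0204029 — 11 statements merged into one kernel-verified Lean document; each statement's English description precedes it below -/
import Mathlib

section
/- Let 𝔥 be a complex Hilbert space, Γ an anti-unitary involution, P a basis projection (P + ΓPΓ = 1) with range 𝔭, and 𝔮 a closed Γ-invariant subspace. Then the following are equivalent: (i) if q ∈ 𝔮 and Pq = 0 then q = 0; (ii) P(𝔮^⊥) is dense in 𝔭; (iii) 𝔮 ∩ 𝔭 = {0}. -/
open scoped ComplexInnerProductSpace

/-!
Write `𝔭` for the range of `P`. The relation `P + ΓPΓ = 1` shows that the involution `Γ` swaps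
`ker P` and `𝔭`; since it also preserves `𝔮`, it swaps `𝔮 ⊓ ker P` and `𝔮 ⊓ 𝔭`, which gives
(i) ⟺ (iii). For (ii) ⟺ (iii), self-adjointness of `P` gives `(P 𝔮ᗮ)ᗮ = P⁻¹ 𝔮`, so the closure
of `P 𝔮ᗮ` is `(P⁻¹ 𝔮)ᗮ`, while `𝔭 = (ker P)ᗮ`. As both `P⁻¹ 𝔮 ⊇ ker P` are closed, (ii) says
`P⁻¹ 𝔮 = ker P`, i.e. `P (P⁻¹ 𝔮) = 𝔮 ⊓ 𝔭` vanishes.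
-/

open ContinuousLinearMap

theorem Submodule.comap_eq_ker_iff_inf_range_eq_bot {R R₂ M M₂ : Type*} [Semiring R]
    [Semiring R₂] [AddCommMonoid M] [AddCommMonoid M₂] [Module R M] [Module R₂ M₂]
    {τ₁₂ : R →+* R₂} [RingHomSurjective τ₁₂] (f : M →ₛₗ[τ₁₂] M₂) (q : Submodule R₂ M₂) :
    q.comap f = LinearMap.ker f ↔ q ⊓ LinearMap.range f = ⊥ := by
  rw [← (LinearMap.ker_le_comap f).ge_iff_eq', LinearMap.le_ker_iff_map, Submodule.map_comap_eq,
    inf_comm]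

section InnerProductSpace

variable {𝕜 E F : Type*} [RCLike 𝕜] [NormedAddCommGroup E] [InnerProductSpace 𝕜 E]
  [NormedAddCommGroup F] [InnerProductSpace 𝕜 F]

theorem Submodule.orthogonal_inj_of_isClosed [CompleteSpace E] {K L : Submodule 𝕜 E}
    (hK : IsClosed (K : Set E)) (hL : IsClosed (L : Set E)) : Kᗮ = Lᗮ ↔ K = L := by
  refine ⟨fun h => ?_, congrArg _⟩
  rw [← hK.submodule_topologicalClosure_eq, ← hL.submodule_topologicalClosure_eq,
    ← K.orthogonal_orthogonal_eq_closure, ← L.orthogonal_orthogonal_eq_closure, h]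

theorem Submodule.orthogonal_map_eq_comap_adjoint [CompleteSpace E] [CompleteSpace F]
    (T : E →L[𝕜] F) (K : Submodule 𝕜 E) :
    (K.map (T : E →ₗ[𝕜] F))ᗮ = Kᗮ.comap (adjoint T : F →ₗ[𝕜] E) := by
  ext z
  simp [Submodule.mem_orthogonal, adjoint_inner_right]

variable [CompleteSpace E] {P : E →L[𝕜] E}

theorem IsSelfAdjoint.closure_image_orthogonal (hP : IsSelfAdjoint P) {K : Submodule 𝕜 E}
    (hK : IsClosed (K : Set E)) :
    closure (P '' (Kᗮ : Set E)) = ((K.comap (P : E →ₗ[𝕜] E))ᗮ : Set E) := by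
  rw [← P.coe_coe, ← Submodule.map_coe, ← Submodule.topologicalClosure_coe,
    ← Submodule.orthogonal_orthogonal_eq_closure, Submodule.orthogonal_map_eq_comap_adjoint,
    hP.adjoint_eq, K.orthogonal_orthogonal_eq_closure, hK.submodule_topologicalClosure_eq]

theorem IsStarProjection.orthogonal_ker (hP : IsStarProjection P) :
    (LinearMap.ker (P : E →ₗ[𝕜] E))ᗮ = LinearMap.range (P : E →ₗ[𝕜] E) := by
  rw [P.orthogonal_ker, hP.isSelfAdjoint.adjoint_eq,
    (IsIdempotentElem.isClosed_range hP.isIdempotentElem).submodule_topologicalClosure_eq]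

theorem IsStarProjection.closure_image_orthogonal_eq_range_iff (hP : IsStarProjection P)
    {K : Submodule 𝕜 E} (hK : IsClosed (K : Set E)) :
    closure (P '' (Kᗮ : Set E)) = (LinearMap.range (P : E →ₗ[𝕜] E) : Set E) ↔
      K ⊓ LinearMap.range (P : E →ₗ[𝕜] E) = ⊥ := by
  conv_lhs => rw [hP.isSelfAdjoint.closure_image_orthogonal hK, ← hP.orthogonal_ker,
    SetLike.coe_set_eq,
    Submodule.orthogonal_inj_of_isClosed (hK.preimage P.continuous) P.isClosed_ker]
  exact Submodule.comap_eq_ker_iff_inf_range_eq_bot _ K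

end InnerProductSpace

theorem apply_apply_eq_self_iff_apply_eq_zero {M : Type*} [AddGroup M] {Γ P : M → M}
    (hΓ : Function.Involutive Γ) (hP : ∀ x, P x + Γ (P (Γ x)) = x) (x : M) :
    P (Γ x) = Γ x ↔ P x = 0 := by
  constructor
  · intro h
    simpa [h, hΓ x] using hP x
  · intro h
    exact hΓ.eq_iff.mp (by simpa [h] using hP x)

theorem forall_mem_ker_eq_zero_iff_inf_range_eq_bot {R M : Type*} [Semiring R] [AddCommGroup M]
    [Module R M] {Γ : M → M} (hΓ : Function.Involutive Γ) (hΓ0 : Γ 0 = 0) {P : M →ₗ[R] M}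
    (hP_idem : IsIdempotentElem P) (hP : ∀ x, P x + Γ (P (Γ x)) = x) {q : Submodule R M}
    (hq : ∀ x ∈ q, Γ x ∈ q) :
    (∀ x ∈ q, P x = 0 → x = 0) ↔ q ⊓ LinearMap.range P = ⊥ := by
  have eq_zero_of_apply : ∀ x, Γ x = 0 → x = 0 := fun x h => by rw [← hΓ x, h, hΓ0]
  simp only [Submodule.eq_bot_iff, Submodule.mem_inf,
    LinearMap.IsIdempotentElem.mem_range_iff hP_idem, and_imp]
  constructor
  · intro h x hx hPx
    refine eq_zero_of_apply x (h _ (hq x hx) ?_)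
    rwa [← apply_apply_eq_self_iff_apply_eq_zero hΓ hP, hΓ x]
  · intro h x hx hPx
    exact eq_zero_of_apply x <| h _ (hq x hx) <|
      (apply_apply_eq_self_iff_apply_eq_zero hΓ hP x).mpr hPx

theorem car_density_equivalences_general
    {E : Type*} [NormedAddCommGroup E] [InnerProductSpace ℂ E] [CompleteSpace E]
    (Γ : E → E)
    (hΓ_add : ∀ x y, Γ (x + y) = Γ x + Γ y)
    (hΓ_inv : ∀ x, Γ (Γ x) = x)
    (P : E →L[ℂ] E) (hP_proj : P ∘L P = P) (hP_sa : IsSelfAdjoint P)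
    (hP_basis : ∀ x, P x + Γ (P (Γ x)) = x)
    (𝔮 : Submodule ℂ E) (h𝔮_closed : IsClosed (𝔮 : Set E))
    (h𝔮Γ : ∀ q ∈ 𝔮, Γ q ∈ 𝔮) :
    ((∀ q ∈ 𝔮, P q = 0 → q = 0) ↔
        closure (P '' (𝔮ᗮ : Set E)) = (LinearMap.range (P : E →ₗ[ℂ] E) : Set E)) ∧
    ((closure (P '' (𝔮ᗮ : Set E)) = (LinearMap.range (P : E →ₗ[ℂ] E) : Set E)) ↔
        𝔮 ⊓ LinearMap.range (P : E →ₗ[ℂ] E) = ⊥) := by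
  have hP : IsStarProjection P := ⟨hP_proj, hP_sa⟩
  have hΓ0 : Γ 0 = 0 := by simpa using hΓ_add 0 0
  have ker_iff := forall_mem_ker_eq_zero_iff_inf_range_eq_bot hΓ_inv hΓ0
    hP.isIdempotentElem.toLinearMap hP_basis h𝔮Γ
  have density_iff := hP.closure_image_orthogonal_eq_range_iff h𝔮_closed
  exact ⟨ker_iff.trans density_iff.symm, density_iff⟩

/-- Lemma 3.1: for a closed `Γ`-invariant subspace `𝔮` and a basis projection `P` with
range `𝔭`, the following are equivalent:
(i) `q ∈ 𝔮` and `P q = 0` imply `q = 0`;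
(ii) `P 𝔮ᗮ` is dense in `𝔭`;
(iii) `𝔮 ⊓ 𝔭 = ⊥`. -/
theorem car_density_equivalences
    {E : Type*} [NormedAddCommGroup E] [InnerProductSpace ℂ E] [CompleteSpace E]
    (Γ : E → E)
    (hΓ_add : ∀ x y, Γ (x + y) = Γ x + Γ y)
    (hΓ_smul : ∀ (c : ℂ) (x : E), Γ (c • x) = (starRingEnd ℂ) c • Γ x)
    (hΓ_inner : ∀ f h : E, ⟪Γ f, Γ h⟫ = ⟪h, f⟫)
    (hΓ_inv : ∀ x, Γ (Γ x) = x)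
    (P : E →L[ℂ] E) (hP_proj : P ∘L P = P) (hP_sa : IsSelfAdjoint P)
    (hP_basis : ∀ x, P x + Γ (P (Γ x)) = x)
    (𝔮 : Submodule ℂ E) (h𝔮_closed : IsClosed (𝔮 : Set E))
    (h𝔮Γ : ∀ q ∈ 𝔮, Γ q ∈ 𝔮) :
    ((∀ q ∈ 𝔮, P q = 0 → q = 0) ↔
        closure (P '' (𝔮ᗮ : Set E)) = (LinearMap.range (P : E →ₗ[ℂ] E) : Set E)) ∧
    ((closure (P '' (𝔮ᗮ : Set E)) = (LinearMap.range (P : E →ₗ[ℂ] E) : Set E)) ↔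
        𝔮 ⊓ LinearMap.range (P : E →ₗ[ℂ] E) = ⊥) :=
  car_density_equivalences_general Γ hΓ_add hΓ_inv P hP_proj hP_sa hP_basis 𝔮 h𝔮_closed h𝔮Γ
end

section
/- Let P, Q be orthogonal projections on a complex Hilbert space 𝔥 whose ranges 𝔭 = P𝔥 and 𝔮 = Q𝔥 are in generic position (i.e. 𝔭∩𝔮 = 𝔭∩𝔮^⊥ = 𝔭^⊥∩𝔮 = 𝔭^⊥∩𝔮^⊥ = {0}). Then the set H_φ := {(q, q^⊥) ∈ 𝔮 × 𝔮^⊥ : P^⊥(q + q^⊥) = 0} is the graph of a linear, injective, closed map φ: 𝔮 → 𝔮^⊥ with dense domain Q𝔭 and dense image Q^⊥𝔭; in particular gra φ = {(Qp, Q^⊥p) : p ∈ 𝔭}. -/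
/-!
Write `P = K.starProjection` and `Q = L.starProjection`. The condition `P⊥(q + q⊥) = 0` says
`q + q⊥ ∈ K`, so `H_φ` is the image of `K` under `p ↦ (Qp, Q⊥p)`. Two points of `H_φ` with the
same first (second) coordinate differ by a vector of `K ⊓ Lᗮ` (of `K ⊓ L`). For density,
`x ⊥ Q K` iff `Qx ∈ Kᗮ ⊓ L = ⊥`, so `(Q K)ᗮ = Lᗮ` and `Q K` is dense in `L`; the same argument
with `Lᗮ` in place of `L` handles `Q⊥ K`.
-/

namespace Submodule

theorem eq_of_add_mem_of_add_mem {R M : Type*} [Ring R] [AddCommGroup M] [Module R M]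
    {K N : Submodule R M} (h : Disjoint K N) {a b b' : M} (hb : b ∈ N) (hb' : b' ∈ N)
    (hab : a + b ∈ K) (hab' : a + b' ∈ K) : b = b' := by
  have hK : b - b' ∈ K := by simpa using K.sub_mem hab hab'
  exact sub_eq_zero.mp (disjoint_def.mp h _ hK (N.sub_mem hb hb'))

variable {𝕜 E : Type*} [RCLike 𝕜] [NormedAddCommGroup E] [InnerProductSpace 𝕜 E]

theorem HasOrthogonalProjection.isClosed (K : Submodule 𝕜 E) [K.HasOrthogonalProjection] :
    IsClosed (K : Set E) :=
  K.orthogonal_orthogonal ▸ Kᗮ.isClosed_orthogonal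

variable (K L : Submodule 𝕜 E) [L.HasOrthogonalProjection]

theorem setOf_mem_add_mem_eq_image :
    {z : E × E | z.1 ∈ L ∧ z.2 ∈ Lᗮ ∧ z.1 + z.2 ∈ K} =
      {z : E × E | ∃ p ∈ K, z = (L.starProjection p, Lᗮ.starProjection p)} := by
  ext ⟨a, b⟩
  simp only [Set.mem_ofPred_eq, Prod.mk.injEq]
  constructor
  · rintro ⟨ha, hb, hab⟩
    refine ⟨a + b, hab, ?_, ?_⟩
    · rw [map_add, starProjection_eq_self_iff.mpr ha, L.starProjection_apply_eq_zero_iff.mpr hb,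
        add_zero]
    · rw [map_add, starProjection_eq_self_iff.mpr hb,
        Lᗮ.starProjection_apply_eq_zero_iff.mpr (L.le_orthogonal_orthogonal ha), zero_add]
  · rintro ⟨p, hp, rfl, rfl⟩
    exact ⟨starProjection_apply_mem _ _, starProjection_apply_mem _ _, by
      rwa [starProjection_add_starProjection_orthogonal]⟩

theorem isClosed_setOf_mem_add_mem [K.HasOrthogonalProjection] :
    IsClosed {z : E × E | z.1 ∈ L ∧ z.2 ∈ Lᗮ ∧ z.1 + z.2 ∈ K} :=
  ((HasOrthogonalProjection.isClosed L).preimage continuous_fst).inter <|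
    (L.isClosed_orthogonal.preimage continuous_snd).inter <|
      (HasOrthogonalProjection.isClosed K).preimage (continuous_fst.add continuous_snd)

theorem orthogonal_map_starProjection (h : Disjoint Kᗮ L) :
    (K.map (L.starProjection : E →ₗ[𝕜] E))ᗮ = Lᗮ := by
  ext x
  have hmap : x ∈ (K.map (L.starProjection : E →ₗ[𝕜] E))ᗮ ↔ L.starProjection x ∈ Kᗮ := by
    simp only [mem_orthogonal, mem_map, forall_exists_index, and_imp, forall_apply_eq_imp_iff₂,
      ContinuousLinearMap.coe_coe, inner_starProjection_left_eq_right]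
  rw [hmap, ← L.starProjection_apply_eq_zero_iff]
  exact ⟨fun hx ↦ disjoint_def.mp h _ hx (starProjection_apply_mem _ _), fun hx ↦ hx ▸ zero_mem _⟩

theorem closure_image_starProjection [CompleteSpace E] (h : Disjoint Kᗮ L) :
    closure (L.starProjection '' K) = L := by
  have himage : L.starProjection '' K = K.map (L.starProjection : E →ₗ[𝕜] E) := (K.map_coe _).symm
  rw [himage, ← topologicalClosure_coe, ← orthogonal_orthogonal_eq_closure,
    orthogonal_map_starProjection K L h, orthogonal_orthogonal]

end Submodule

/-- Lemma 4.1 (part, for `φ`): with `𝔭 = ran P` and `𝔮 = ran Q` in generic position, the set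
`H_φ = {(q,q⊥) ∈ 𝔮 × 𝔮ᗮ : P⊥(q+q⊥) = 0}` is the graph of a linear, injective, closed map
`φ : 𝔮 → 𝔮ᗮ` with dense domain `Q𝔭` and dense image `Q⊥𝔭`; explicitly
`gra φ = {(Qp, Q⊥p) : p ∈ 𝔭}`. -/
theorem graph_phi
    {E : Type*} [NormedAddCommGroup E] [InnerProductSpace ℂ E] [CompleteSpace E]
    (P : E →L[ℂ] E) (hP_proj : P ∘L P = P) (hP_sa : IsSelfAdjoint P)
    (Q : E →L[ℂ] E) (hQ_proj : Q ∘L Q = Q) (hQ_sa : IsSelfAdjoint Q)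
    (hgen1 : LinearMap.range (P : E →ₗ[ℂ] E) ⊓ LinearMap.range (Q : E →ₗ[ℂ] E) = ⊥)
    (hgen2 : LinearMap.range (P : E →ₗ[ℂ] E) ⊓ (LinearMap.range (Q : E →ₗ[ℂ] E))ᗮ = ⊥)
    (hgen3 : (LinearMap.range (P : E →ₗ[ℂ] E))ᗮ ⊓ LinearMap.range (Q : E →ₗ[ℂ] E) = ⊥)
    (hgen4 : (LinearMap.range (P : E →ₗ[ℂ] E))ᗮ ⊓ (LinearMap.range (Q : E →ₗ[ℂ] E))ᗮ = ⊥)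
    (Hφ : Set (E × E))
    (hHφ : Hφ = {z : E × E | z.1 ∈ LinearMap.range (Q : E →ₗ[ℂ] E) ∧ z.2 ∈ (LinearMap.range (Q : E →ₗ[ℂ] E))ᗮ ∧
      (1 - P) (z.1 + z.2) = 0}) :
    -- parametrization of the graph by 𝔭
    Hφ = {z : E × E | ∃ p ∈ LinearMap.range (P : E →ₗ[ℂ] E), z = (Q p, (1 - Q) p)} ∧
    -- `Hφ` is the graph of a (single-valued) map
    (∀ z ∈ Hφ, ∀ w ∈ Hφ, z.1 = w.1 → z.2 = w.2) ∧
    -- this map is injective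
    (∀ z ∈ Hφ, ∀ w ∈ Hφ, z.2 = w.2 → z.1 = w.1) ∧
    -- the map is closed (its graph is a closed set)
    IsClosed Hφ ∧
    -- dense domain in 𝔮
    closure (Prod.fst '' Hφ) = (LinearMap.range (Q : E →ₗ[ℂ] E) : Set E) ∧
    -- dense image in 𝔮ᗮ
    closure (Prod.snd '' Hφ) = ((LinearMap.range (Q : E →ₗ[ℂ] E))ᗮ : Set E) := by
  obtain ⟨K, _, rfl⟩ := isStarProjection_iff_eq_starProjection.mp ⟨hP_proj, hP_sa⟩
  obtain ⟨L, _, rfl⟩ := isStarProjection_iff_eq_starProjection.mp ⟨hQ_proj, hQ_sa⟩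
  simp only [Submodule.range_starProjection] at hgen1 hgen2 hgen3 hgen4 hHφ ⊢
  simp only [← Submodule.starProjection_orthogonal', Kᗮ.starProjection_apply_eq_zero_iff,
    Submodule.orthogonal_orthogonal] at hHφ ⊢
  subst hHφ
  have hgraph := Submodule.setOf_mem_add_mem_eq_image K L
  refine ⟨hgraph, ?_, ?_, Submodule.isClosed_setOf_mem_add_mem K L, ?_, ?_⟩
  · rintro ⟨a, b⟩ ⟨-, hb, hab⟩ ⟨a', b'⟩ ⟨-, hb', hab'⟩ rfl
    exact Submodule.eq_of_add_mem_of_add_mem (disjoint_iff.mpr hgen2) hb hb' hab hab'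
  · rintro ⟨a, b⟩ ⟨ha, -, hab⟩ ⟨a', b'⟩ ⟨ha', -, hab'⟩ rfl
    rw [add_comm] at hab hab'
    exact Submodule.eq_of_add_mem_of_add_mem (disjoint_iff.mpr hgen1) ha ha' hab hab'
  · rw [hgraph, ← Submodule.closure_image_starProjection K L (disjoint_iff.mpr hgen3)]
    congr 1
    ext; simp [eq_comm]
  · rw [hgraph, ← Submodule.closure_image_starProjection K Lᗮ (disjoint_iff.mpr hgen4)]
    congr 1
    ext; simp [eq_comm]
end

section
/- Let P, Q be orthogonal projections on a complex Hilbert space 𝔥 with ranges in generic position. Define φ: 𝔮 → 𝔮^⊥ by gra φ = {(Qp, Q^⊥p) : p ∈ 𝔭} and ρ: 𝔮 → 𝔮^⊥ by gra ρ = {(Qp^⊥, −Q^⊥p^⊥) : p^⊥ ∈ 𝔭^⊥}. Then ρ^{-1} = φ*, i.e. the adjoint of φ equals the inverse of ρ. -/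
/-!
For a symmetric projection `T` with range `𝔮`, and `x ∈ 𝔮ᗮ`, `y ∈ 𝔮`, one has
`⟪(1 - T) p, x⟫ = ⟪p, x⟫` and `⟪T p, y⟫ = ⟪p, y⟫`. So the defining condition of `gra φ*` says
exactly that `y - x ∈ 𝔭ᗮ`, and `(x, y) ↦ y - x` is inverse to `p' ↦ (-(1 - T) p', T p')`
between `𝔮ᗮ × 𝔮` and `E`.
-/

open scoped ComplexInnerProductSpace InnerProductSpace

namespace LinearMap.IsSymmetricProjection

open Submodule Module.End

variable {𝕜 E : Type*} [RCLike 𝕜] [NormedAddCommGroup E] [InnerProductSpace 𝕜 E]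
  {T : E →ₗ[𝕜] E}

theorem inner_apply_left_of_mem_range (hT : T.IsSymmetricProjection) (p : E) {y : E}
    (hy : y ∈ range T) : ⟪T p, y⟫_𝕜 = ⟪p, y⟫_𝕜 := by
  rw [hT.isSymmetric, (IsIdempotentElem.mem_range_iff hT.isIdempotentElem).mp hy]

theorem inner_one_sub_apply_left_of_mem_orthogonal_range (p : E) {x : E}
    (hx : x ∈ (range T)ᗮ) : ⟪(1 - T) p, x⟫_𝕜 = ⟪p, x⟫_𝕜 := by
  rw [sub_apply, inner_sub_left, inner_right_of_mem_orthogonal (mem_range_self T p) hx,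
    one_apply, sub_zero]

theorem one_sub_apply_mem_orthogonal_range (hT : T.IsSymmetricProjection) (p : E) :
    (1 - T) p ∈ (range T)ᗮ := by
  rw [hT.isSymmetric.orthogonal_range, mem_ker, sub_apply, one_apply, map_sub,
    ← mul_apply, hT.isIdempotentElem.eq, sub_self]

theorem apply_sub_eq_of_mem_orthogonal_range (hT : T.IsSymmetricProjection) {x y : E}
    (hx : x ∈ (range T)ᗮ) (hy : y ∈ range T) : T (y - x) = y := by
  rw [hT.isSymmetric.orthogonal_range, mem_ker] at hx
  rw [map_sub, hx, (IsIdempotentElem.mem_range_iff hT.isIdempotentElem).mp hy, sub_zero]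

theorem forall_inner_eq_iff_sub_mem_orthogonal (hT : T.IsSymmetricProjection)
    (V : Submodule 𝕜 E) {x y : E} (hx : x ∈ (range T)ᗮ) (hy : y ∈ range T) :
    (∀ p ∈ V, ⟪(1 - T) p, x⟫_𝕜 = ⟪T p, y⟫_𝕜) ↔ y - x ∈ Vᗮ := by
  simp only [mem_orthogonal, inner_sub_right, sub_eq_zero, eq_comm,
    inner_one_sub_apply_left_of_mem_orthogonal_range _ hx, hT.inner_apply_left_of_mem_range _ hy]

theorem graph_adjoint_eq_graph_inv (hT : T.IsSymmetricProjection) (V : Submodule 𝕜 E) :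
    {z : E × E | z.1 ∈ (range T)ᗮ ∧ z.2 ∈ range T ∧
        ∀ p ∈ V, ⟪(1 - T) p, z.1⟫_𝕜 = ⟪T p, z.2⟫_𝕜}
      = {z : E × E | ∃ p ∈ Vᗮ, z = (-((1 - T) p), T p)} := by
  ext ⟨x, y⟩
  simp only [Set.mem_ofPred_eq]
  constructor
  · rintro ⟨hx, hy, h⟩
    refine ⟨y - x, (hT.forall_inner_eq_iff_sub_mem_orthogonal V hx hy).mp h, ?_⟩
    rw [sub_apply, one_apply, hT.apply_sub_eq_of_mem_orthogonal_range hx hy,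
      sub_sub_cancel_left, neg_neg]
  · rintro ⟨p, hp, ⟨⟩⟩
    have hx := neg_mem (hT.one_sub_apply_mem_orthogonal_range p)
    have hy := mem_range_self T p
    refine ⟨hx, hy, (hT.forall_inner_eq_iff_sub_mem_orthogonal V hx hy).mpr ?_⟩
    rwa [sub_neg_eq_add, sub_apply, one_apply, add_sub_cancel]

end LinearMap.IsSymmetricProjection

theorem rho_inverse_eq_phi_adjoint_general
    {E : Type*} [NormedAddCommGroup E] [InnerProductSpace ℂ E] [CompleteSpace E]
    (P : E →L[ℂ] E)
    (Q : E →L[ℂ] E) (hQ_proj : Q ∘L Q = Q) (hQ_sa : IsSelfAdjoint Q) :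
    -- graph of the adjoint `φ*` of `φ` (where `gra φ = {(Qp, Q⊥p) : p ∈ 𝔭}`) …
    {z : E × E | z.1 ∈ (LinearMap.range (Q : E →ₗ[ℂ] E))ᗮ ∧ z.2 ∈ LinearMap.range (Q : E →ₗ[ℂ] E) ∧
        ∀ p ∈ LinearMap.range (P : E →ₗ[ℂ] E), ⟪(1 - Q) p, z.1⟫ = ⟪Q p, z.2⟫}
    -- … equals the graph of `ρ⁻¹` (where `gra ρ = {(Qp⊥, −Q⊥p⊥) : p⊥ ∈ 𝔭ᗮ}`)
    = {z : E × E | ∃ p' ∈ (LinearMap.range (P : E →ₗ[ℂ] E))ᗮ, z = (-((1 - Q) p'), Q p')} := by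
  have hQ : (Q : E →ₗ[ℂ] E).IsSymmetricProjection :=
    ⟨congrArg ContinuousLinearMap.toLinearMap hQ_proj,
      ContinuousLinearMap.isSelfAdjoint_iff_isSymmetric.mp hQ_sa⟩
  exact hQ.graph_adjoint_eq_graph_inv (LinearMap.range (P : E →ₗ[ℂ] E))

/-- Lemma 4.1 (adjoint part): with `𝔭, 𝔮` in generic position, `φ` with graph
`{(Qp, Q⊥p) : p ∈ 𝔭}` and `ρ` with graph `{(Qp⊥, −Q⊥p⊥) : p⊥ ∈ 𝔭ᗮ}`, one has `ρ⁻¹ = φ*`: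
the graph of the adjoint of `φ` equals the graph of the inverse of `ρ`. -/
theorem rho_inverse_eq_phi_adjoint
    {E : Type*} [NormedAddCommGroup E] [InnerProductSpace ℂ E] [CompleteSpace E]
    (P : E →L[ℂ] E) (hP_proj : P ∘L P = P) (hP_sa : IsSelfAdjoint P)
    (Q : E →L[ℂ] E) (hQ_proj : Q ∘L Q = Q) (hQ_sa : IsSelfAdjoint Q)
    (hgen1 : LinearMap.range (P : E →ₗ[ℂ] E) ⊓ LinearMap.range (Q : E →ₗ[ℂ] E) = ⊥)
    (hgen2 : LinearMap.range (P : E →ₗ[ℂ] E) ⊓ (LinearMap.range (Q : E →ₗ[ℂ] E))ᗮ = ⊥)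
    (hgen3 : (LinearMap.range (P : E →ₗ[ℂ] E))ᗮ ⊓ LinearMap.range (Q : E →ₗ[ℂ] E) = ⊥)
    (hgen4 : (LinearMap.range (P : E →ₗ[ℂ] E))ᗮ ⊓ (LinearMap.range (Q : E →ₗ[ℂ] E))ᗮ = ⊥) :
    -- graph of the adjoint `φ*` of `φ` (where `gra φ = {(Qp, Q⊥p) : p ∈ 𝔭}`) …
    {z : E × E | z.1 ∈ (LinearMap.range (Q : E →ₗ[ℂ] E))ᗮ ∧ z.2 ∈ LinearMap.range (Q : E →ₗ[ℂ] E) ∧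
        ∀ p ∈ LinearMap.range (P : E →ₗ[ℂ] E), ⟪(1 - Q) p, z.1⟫ = ⟪Q p, z.2⟫}
    -- … equals the graph of `ρ⁻¹` (where `gra ρ = {(Qp⊥, −Q⊥p⊥) : p⊥ ∈ 𝔭ᗮ}`)
    = {z : E × E | ∃ p' ∈ (LinearMap.range (P : E →ₗ[ℂ] E))ᗮ, z = (-((1 - Q) p'), Q p')} :=
  rho_inverse_eq_phi_adjoint_general P Q hQ_proj hQ_sa
end

section
/- Let P, Q be orthogonal projections on a complex Hilbert space 𝔥 with ranges 𝔭, 𝔮 in generic position. Then the set H_λ := {(p, p^⊥) ∈ 𝔭 × 𝔭^⊥ : Q^⊥p = Q^⊥p^⊥} is the graph of a linear injective closed map λ: 𝔭 → 𝔭^⊥ with dense domain and dense image, and gra λ = {(Pq, −P^⊥q) : q ∈ 𝔮}. -/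
/-!
For `p ∈ 𝔭`, `p' ∈ 𝔭ᗮ` the condition `Q^⊥ p = Q^⊥ p'` says that `q := p - p'` lies in `𝔮`, and
then `p = P q`, `p' = -P^⊥ q`; this is the parametrization of `H_λ` by `𝔮`. Two points of `H_λ`
with the same first (second) coordinate differ by a vector of `𝔭ᗮ ∩ 𝔮` (of `𝔭 ∩ 𝔮`), hence agree.
A vector orthogonal to the domain `P 𝔮` has `P x ∈ 𝔭 ∩ 𝔮ᗮ = 0`, so `(P 𝔮)ᗮ = 𝔭ᗮ` and `P 𝔮` is
dense in `𝔭`; symmetrically `P^⊥ 𝔮` is dense in `𝔭ᗮ` because `𝔭ᗮ ∩ 𝔮ᗮ = 0`.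
-/
theorem ContinuousLinearMap.IsIdempotentElem.one_sub_apply_eq_iff {R M : Type*} [Ring R]
    [TopologicalSpace M] [AddCommGroup M] [IsTopologicalAddGroup M] [Module R M]
    {p : M →L[R] M} (hp : IsIdempotentElem p) (x y : M) :
    (1 - p) x = (1 - p) y ↔ x - y ∈ LinearMap.range (p : M →ₗ[R] M) := by
  rw [LinearMap.IsIdempotentElem.mem_range_iff (toLinearMap hp), ← sub_eq_zero, ← map_sub,
    sub_apply, one_apply_eq_self, sub_eq_zero, eq_comm, coe_coe]

namespace Submodule

variable {𝕜 E : Type*} [RCLike 𝕜] [NormedAddCommGroup E] [InnerProductSpace 𝕜 E]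

/-- The set `H_λ` of the paper for `𝔭 = K`, `𝔮 = M`; the condition `Q^⊥ p = Q^⊥ p'` is
encoded as `p - p' ∈ M`. -/
def lambdaGraph (K M : Submodule 𝕜 E) : Set (E × E) :=
  {z | z.1 ∈ K ∧ z.2 ∈ Kᗮ ∧ z.1 - z.2 ∈ M}

variable {K M : Submodule 𝕜 E}

theorem lambdaGraph_eq_image [K.HasOrthogonalProjection] :
    lambdaGraph K M = (fun q ↦ (K.starProjection q, -Kᗮ.starProjection q)) '' M := by
  ext ⟨p, p'⟩
  simp only [lambdaGraph, Set.mem_image, SetLike.mem_coe, Prod.mk.injEq]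
  constructor
  · rintro ⟨hp, hp', hM⟩
    refine ⟨p - p', hM, ?_, ?_⟩
    · rw [map_sub, starProjection_eq_self_iff.mpr hp, (starProjection_apply_eq_zero_iff K).mpr hp',
        sub_zero]
    · rw [map_sub, starProjection_eq_self_iff.mpr hp', (starProjection_apply_eq_zero_iff Kᗮ).mpr
        (K.le_orthogonal_orthogonal hp), zero_sub, neg_neg]
  · rintro ⟨q, hq, rfl, rfl⟩
    refine ⟨K.starProjection_apply_mem q, neg_mem (Kᗮ.starProjection_apply_mem q), ?_⟩
    rwa [sub_neg_eq_add, starProjection_add_starProjection_orthogonal]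

theorem snd_eq_of_mem_lambdaGraph (h : Kᗮ ⊓ M = ⊥) {z w : E × E} (hz : z ∈ lambdaGraph K M)
    (hw : w ∈ lambdaGraph K M) (h1 : z.1 = w.1) : z.2 = w.2 := by
  have hd : z.2 - w.2 ∈ Kᗮ ⊓ M := by
    refine ⟨sub_mem hz.2.1 hw.2.1, ?_⟩
    simpa [h1] using sub_mem hw.2.2 hz.2.2
  rw [h, mem_bot, sub_eq_zero] at hd
  exact hd

theorem fst_eq_of_mem_lambdaGraph (h : K ⊓ M = ⊥) {z w : E × E} (hz : z ∈ lambdaGraph K M)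
    (hw : w ∈ lambdaGraph K M) (h2 : z.2 = w.2) : z.1 = w.1 := by
  have hd : z.1 - w.1 ∈ K ⊓ M := by
    refine ⟨sub_mem hz.1 hw.1, ?_⟩
    simpa [h2] using sub_mem hz.2.2 hw.2.2
  rw [h, mem_bot, sub_eq_zero] at hd
  exact hd

theorem isClosed_lambdaGraph (hK : IsClosed (K : Set E)) (hM : IsClosed (M : Set E)) :
    IsClosed (lambdaGraph K M) :=
  (hK.preimage continuous_fst).inter <|
    (K.isClosed_orthogonal.preimage continuous_snd).inter <|
      hM.preimage (continuous_fst.sub continuous_snd)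

theorem fst_image_lambdaGraph [K.HasOrthogonalProjection] :
    Prod.fst '' lambdaGraph K M = (M.map (K.starProjection : E →ₗ[𝕜] E) : Set E) := by
  rw [lambdaGraph_eq_image, Set.image_image]
  rfl

theorem snd_image_lambdaGraph [K.HasOrthogonalProjection] :
    Prod.snd '' lambdaGraph K M = (M.map (Kᗮ.starProjection : E →ₗ[𝕜] E) : Set E) := by
  rw [lambdaGraph_eq_image, Set.image_image]
  ext x
  constructor
  · rintro ⟨q, hq, rfl⟩
    exact ⟨-q, neg_mem hq, map_neg _ q⟩
  · rintro ⟨q, hq, rfl⟩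
    exact ⟨-q, neg_mem hq, by simp only [map_neg, neg_neg, ContinuousLinearMap.coe_coe]⟩

theorem orthogonal_map_starProjection_s4 [K.HasOrthogonalProjection] :
    (M.map (K.starProjection : E →ₗ[𝕜] E))ᗮ = Mᗮ.comap (K.starProjection : E →ₗ[𝕜] E) := by
  ext x
  simp only [mem_orthogonal, mem_map, mem_comap, forall_exists_index, and_imp,
    forall_apply_eq_imp_iff₂, ContinuousLinearMap.coe_coe, inner_starProjection_left_eq_right]

theorem topologicalClosure_map_starProjection [CompleteSpace E] [K.HasOrthogonalProjection]
    (h : K ⊓ Mᗮ = ⊥) : (M.map (K.starProjection : E →ₗ[𝕜] E)).topologicalClosure = K := by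
  suffices (M.map (K.starProjection : E →ₗ[𝕜] E))ᗮ = Kᗮ by
    rw [← orthogonal_orthogonal_eq_closure, this, orthogonal_orthogonal]
  rw [orthogonal_map_starProjection_s4]
  ext x
  rw [mem_comap, ← starProjection_apply_eq_zero_iff K, ← mem_bot 𝕜, ← h]
  exact ⟨fun hx ↦ ⟨K.starProjection_apply_mem x, hx⟩, fun hx ↦ hx.2⟩

end Submodule

open Submodule in
theorem graph_lambda_general
    {E : Type*} [NormedAddCommGroup E] [InnerProductSpace ℂ E] [CompleteSpace E]
    (P : E →L[ℂ] E) (hP_proj : P ∘L P = P) (hP_sa : IsSelfAdjoint P)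
    (Q : E →L[ℂ] E) (hQ_proj : Q ∘L Q = Q)
    (hgen1 : LinearMap.range (P : E →ₗ[ℂ] E) ⊓ LinearMap.range (Q : E →ₗ[ℂ] E) = ⊥)
    (hgen2 : LinearMap.range (P : E →ₗ[ℂ] E) ⊓ (LinearMap.range (Q : E →ₗ[ℂ] E))ᗮ = ⊥)
    (hgen3 : (LinearMap.range (P : E →ₗ[ℂ] E))ᗮ ⊓ LinearMap.range (Q : E →ₗ[ℂ] E) = ⊥)
    (hgen4 : (LinearMap.range (P : E →ₗ[ℂ] E))ᗮ ⊓ (LinearMap.range (Q : E →ₗ[ℂ] E))ᗮ = ⊥)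
    (Hlam : Set (E × E))
    (hHlam : Hlam = {z : E × E | z.1 ∈ LinearMap.range (P : E →ₗ[ℂ] E) ∧ z.2 ∈ (LinearMap.range (P : E →ₗ[ℂ] E))ᗮ ∧
      (1 - Q) z.1 = (1 - Q) z.2}) :
    -- parametrization of the graph by 𝔮
    Hlam = {z : E × E | ∃ q ∈ LinearMap.range (Q : E →ₗ[ℂ] E), z = (P q, -((1 - P) q))} ∧
    -- `Hlam` is the graph of a (single-valued) map
    (∀ z ∈ Hlam, ∀ w ∈ Hlam, z.1 = w.1 → z.2 = w.2) ∧
    -- this map is injective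
    (∀ z ∈ Hlam, ∀ w ∈ Hlam, z.2 = w.2 → z.1 = w.1) ∧
    -- the map is closed
    IsClosed Hlam ∧
    -- dense domain in 𝔭
    closure (Prod.fst '' Hlam) = (LinearMap.range (P : E →ₗ[ℂ] E) : Set E) ∧
    -- dense image in 𝔭ᗮ
    closure (Prod.snd '' Hlam) = ((LinearMap.range (P : E →ₗ[ℂ] E))ᗮ : Set E) := by
  obtain ⟨_, hP⟩ := isStarProjection_iff_eq_starProjection_range.mp ⟨hP_proj, hP_sa⟩
  set K := LinearMap.range (P : E →ₗ[ℂ] E)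
  set M := LinearMap.range (Q : E →ₗ[ℂ] E)
  have hP' : 1 - P = Kᗮ.starProjection := by rw [starProjection_orthogonal', ← hP]
  have hQ := ContinuousLinearMap.IsIdempotentElem.one_sub_apply_eq_iff (p := Q) hQ_proj
  obtain rfl : Hlam = lambdaGraph K M := by simp only [hHlam, hQ]; rfl
  refine ⟨?_, fun z hz w hw ↦ snd_eq_of_mem_lambdaGraph hgen3 hz hw,
    fun z hz w hw ↦ fst_eq_of_mem_lambdaGraph hgen1 hz hw,
    isClosed_lambdaGraph (ContinuousLinearMap.IsIdempotentElem.isClosed_range (p := P) hP_proj)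
      (ContinuousLinearMap.IsIdempotentElem.isClosed_range (p := Q) hQ_proj), ?_, ?_⟩
  · rw [lambdaGraph_eq_image, hP', ← hP]
    ext z
    simp only [Set.mem_image, SetLike.mem_coe]
    exact exists_congr fun q ↦ and_congr_right fun _ ↦ eq_comm
  · rw [fst_image_lambdaGraph, ← topologicalClosure_coe,
      topologicalClosure_map_starProjection hgen2]
  · rw [snd_image_lambdaGraph, ← topologicalClosure_coe,
      topologicalClosure_map_starProjection hgen4]

/-- Corollary 4.3 (`Lambda`): the set `H_λ = {(p,p⊥) ∈ 𝔭 × 𝔭ᗮ : Q⊥p = Q⊥p⊥}` is the graph of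
a linear injective closed map `λ : 𝔭 → 𝔭ᗮ` with dense domain and dense image, and
`gra λ = {(Pq, −P⊥q) : q ∈ 𝔮}`. -/
theorem graph_lambda
    {E : Type*} [NormedAddCommGroup E] [InnerProductSpace ℂ E] [CompleteSpace E]
    (P : E →L[ℂ] E) (hP_proj : P ∘L P = P) (hP_sa : IsSelfAdjoint P)
    (Q : E →L[ℂ] E) (hQ_proj : Q ∘L Q = Q) (hQ_sa : IsSelfAdjoint Q)
    (hgen1 : LinearMap.range (P : E →ₗ[ℂ] E) ⊓ LinearMap.range (Q : E →ₗ[ℂ] E) = ⊥)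
    (hgen2 : LinearMap.range (P : E →ₗ[ℂ] E) ⊓ (LinearMap.range (Q : E →ₗ[ℂ] E))ᗮ = ⊥)
    (hgen3 : (LinearMap.range (P : E →ₗ[ℂ] E))ᗮ ⊓ LinearMap.range (Q : E →ₗ[ℂ] E) = ⊥)
    (hgen4 : (LinearMap.range (P : E →ₗ[ℂ] E))ᗮ ⊓ (LinearMap.range (Q : E →ₗ[ℂ] E))ᗮ = ⊥)
    (Hlam : Set (E × E))
    (hHlam : Hlam = {z : E × E | z.1 ∈ LinearMap.range (P : E →ₗ[ℂ] E) ∧ z.2 ∈ (LinearMap.range (P : E →ₗ[ℂ] E))ᗮ ∧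
      (1 - Q) z.1 = (1 - Q) z.2}) :
    -- parametrization of the graph by 𝔮
    Hlam = {z : E × E | ∃ q ∈ LinearMap.range (Q : E →ₗ[ℂ] E), z = (P q, -((1 - P) q))} ∧
    -- `Hlam` is the graph of a (single-valued) map
    (∀ z ∈ Hlam, ∀ w ∈ Hlam, z.1 = w.1 → z.2 = w.2) ∧
    -- this map is injective
    (∀ z ∈ Hlam, ∀ w ∈ Hlam, z.2 = w.2 → z.1 = w.1) ∧
    -- the map is closed
    IsClosed Hlam ∧
    -- dense domain in 𝔭
    closure (Prod.fst '' Hlam) = (LinearMap.range (P : E →ₗ[ℂ] E) : Set E) ∧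
    -- dense image in 𝔭ᗮ
    closure (Prod.snd '' Hlam) = ((LinearMap.range (P : E →ₗ[ℂ] E))ᗮ : Set E) :=
  graph_lambda_general P hP_proj hP_sa Q hQ_proj hgen1 hgen2 hgen3 hgen4 Hlam hHlam
end

section
/- Let P, Q be orthogonal projections on a complex Hilbert space 𝔥 whose ranges 𝔭, 𝔮 are in generic position, and suppose ‖PQ‖ = ‖P^⊥Q‖ = 1. Then 1 is in the spectrum of A := (QP^⊥Q)|_𝔮 but is not an eigenvalue, and consequently P𝔮 is a proper dense subspace of 𝔭; i.e. the map P: 𝔮 → 𝔭 is injective with dense, non-closed range and unbounded inverse. -/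
/-! By Pythagoras, `‖x‖² = ‖Px‖² + ‖P⊥x‖²`; so if `P` were bounded below on `𝔮`, say
`‖x‖ ≤ K ‖Px‖`, then `‖P⊥x‖² ≤ K²/(1+K²) ‖x‖²` on `𝔮` and `‖P⊥Q‖ < 1`. Thus `‖P⊥Q‖ = 1` means
that `P|𝔮` is not bounded below. On `𝔮` we have `1 - A = QP`, so an inverse of `1 - A`
would bound `P` below; and since `P|𝔮` is injective (`𝔭⊥ ∩ 𝔮 = 0`), the open mapping theorem
says that `P𝔮` is closed only if `P|𝔮` is bounded below. A fixed vector `x` of `A` has `QPx = 0`,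
hence `‖Px‖² = ⟪Qx, Px⟫ = ⟪x, QPx⟫ = 0`. Finally `(P𝔮)⊥ = ker (QP) = ker P` because
`𝔭 ∩ 𝔮⊥ = 0`, which gives density. -/

open scoped NNReal InnerProductSpace

namespace ContinuousLinearMap

variable {𝕜 E : Type*} [RCLike 𝕜] [NormedAddCommGroup E] [InnerProductSpace 𝕜 E]
  [CompleteSpace E] {P Q : E →L[𝕜] E}

namespace IsStarProjection

theorem apply_apply (hP : IsStarProjection P) (x : E) : P (P x) = P x :=
  DFunLike.congr_fun hP.1.eq x

theorem apply_of_mem_range (hP : IsStarProjection P) {x : E} (hx : x ∈ P.range) : P x = x :=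
  (LinearMap.IsIdempotentElem.mem_range_iff (IsIdempotentElem.toLinearMap hP.1)).mp hx

theorem inner_apply_left (hP : IsStarProjection P) (x y : E) :
    ⟪P x, y⟫_𝕜 = ⟪x, P y⟫_𝕜 :=
  hP.2.isSymmetric x y

theorem orthogonal_range_eq_ker (hP : IsStarProjection P) : P.rangeᗮ = P.ker := by
  rw [P.orthogonal_range, hP.2.adjoint_eq]

theorem norm_apply_le (hP : IsStarProjection P) (x : E) : ‖P x‖ ≤ ‖x‖ :=
  (P.le_opNorm x).trans (mul_le_of_le_one_left (norm_nonneg x) hP.norm_le)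

theorem norm_sq_add_norm_sub_apply_sq (hP : IsStarProjection P) (x : E) :
    ‖P x‖ ^ 2 + ‖x - P x‖ ^ 2 = ‖x‖ ^ 2 := by
  have horth : ⟪P x, x - P x⟫_𝕜 = 0 := by
    rw [inner_sub_right, ← inner_apply_left hP, apply_apply hP, sub_self]
  simpa only [sq, add_sub_cancel] using
    (norm_add_sq_eq_norm_sq_add_norm_sq_of_inner_eq_zero _ _ horth).symm

end IsStarProjection

theorem norm_one_sub_comp_lt_one_of_antilipschitz (hP : IsStarProjection P)
    (hQ : IsStarProjection Q) {K : ℝ≥0} (hK : AntilipschitzWith K (P ∘L Q.range.subtypeL)) :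
    ‖(1 - P) ∘L Q‖ < 1 := by
  set c : ℝ := K ^ 2 / (1 + K ^ 2)
  have hc : c < 1 := by rw [div_lt_one (by positivity)]; linarith
  have hbound : ∀ x ∈ Q.range, ‖x - P x‖ ^ 2 ≤ c * ‖x‖ ^ 2 := by
    intro x hx
    have hbelow : ‖x‖ ^ 2 ≤ K ^ 2 * ‖P x‖ ^ 2 := by
      have := pow_le_pow_left₀ (norm_nonneg x)
        ((P ∘L Q.range.subtypeL).bound_of_antilipschitz hK ⟨x, hx⟩) 2
      rwa [mul_pow] at this
    have hpyth := IsStarProjection.norm_sq_add_norm_sub_apply_sq hP x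
    rw [div_mul_eq_mul_div, le_div_iff₀ (by positivity)]
    nlinarith [sq_nonneg ‖P x‖]
  calc ‖(1 - P) ∘L Q‖ ≤ √c := opNorm_le_bound _ (Real.sqrt_nonneg c) fun y => ?_
    _ < 1 := (Real.sqrt_lt' one_pos).mpr (by simpa using hc)
  have hQy := hbound (Q y) (LinearMap.mem_range_self _ y)
  refine le_of_pow_le_pow_left₀ two_ne_zero (by positivity) ?_
  calc ‖((1 - P) ∘L Q) y‖ ^ 2 = ‖Q y - P (Q y)‖ ^ 2 := rfl
    _ ≤ c * ‖Q y‖ ^ 2 := hQy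
    _ ≤ c * ‖y‖ ^ 2 := by gcongr; exact IsStarProjection.norm_apply_le hQ y
    _ = (√c * ‖y‖) ^ 2 := by rw [mul_pow, Real.sq_sqrt (by positivity)]

theorem antilipschitz_of_isUnit_one_sub (hQ : IsStarProjection Q) {A : Q.range →L[𝕜] Q.range}
    (hA : ∀ x, (A x : E) = Q ((1 - P) x)) (hunit : IsUnit (1 - A)) :
    ∃ K, AntilipschitzWith K (P ∘L Q.range.subtypeL) := by
  obtain ⟨u, hu⟩ := hunit
  have hsub : ∀ x : Q.range, ((1 - A) x : E) = Q (P x) := by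
    intro x
    rw [sub_apply, Submodule.coe_sub, hA]
    simp [IsStarProjection.apply_of_mem_range hQ x.2]
  set K := ‖((ContinuousLinearEquiv.ofUnit u).symm : Q.range →L[𝕜] Q.range)‖₊
  have hK : AntilipschitzWith K (u : Q.range →L[𝕜] Q.range) :=
    (ContinuousLinearEquiv.ofUnit u).antilipschitz
  refine ⟨K, antilipschitz_of_bound _ fun x => ?_⟩
  calc ‖x‖ ≤ K * ‖(u : Q.range →L[𝕜] Q.range) x‖ := bound_of_antilipschitz _ hK x
    _ = K * ‖Q (P x)‖ := by rw [hu, ← hsub]; rfl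
    _ ≤ K * ‖P x‖ := by gcongr; exact IsStarProjection.norm_apply_le hQ _

theorem one_mem_spectrum_of_norm_eq_one (hP : IsStarProjection P) (hQ : IsStarProjection Q)
    {A : Q.range →L[𝕜] Q.range} (hA : ∀ x, (A x : E) = Q ((1 - P) x))
    (hnorm : ‖(1 - P) ∘L Q‖ = 1) : (1 : 𝕜) ∈ spectrum 𝕜 A := by
  rw [spectrum.mem_iff, map_one]
  intro hunit
  obtain ⟨K, hK⟩ := antilipschitz_of_isUnit_one_sub hQ hA hunit
  exact (norm_one_sub_comp_lt_one_of_antilipschitz hP hQ hK).ne hnorm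

theorem apply_eq_zero_of_mem_range_of_apply_apply_eq_zero (hP : IsStarProjection P)
    (hQ : IsStarProjection Q) {x : E} (hx : x ∈ Q.range) (h : Q (P x) = 0) : P x = 0 := by
  rw [← inner_self_eq_zero (𝕜 := 𝕜)]
  calc ⟪P x, P x⟫_𝕜 = ⟪x, P x⟫_𝕜 := by
        rw [IsStarProjection.inner_apply_left hP, IsStarProjection.apply_apply hP]
    _ = ⟪Q x, P x⟫_𝕜 := by rw [IsStarProjection.apply_of_mem_range hQ hx]
    _ = 0 := by rw [IsStarProjection.inner_apply_left hQ, h, inner_zero_right]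

theorem eq_zero_of_apply_eq_self (hP : IsStarProjection P) (hQ : IsStarProjection Q)
    {A : Q.range →L[𝕜] Q.range} (hA : ∀ x, (A x : E) = Q ((1 - P) x))
    (hker : Disjoint Q.range P.ker) {x : Q.range} (hx : A x = x) : x = 0 := by
  have hQP : Q (P x) = 0 := by
    have := hA x
    rw [hx, sub_apply, one_apply_eq_self, map_sub,
      IsStarProjection.apply_of_mem_range hQ x.2] at this
    exact sub_eq_self.mp this.symm
  have hPx := apply_eq_zero_of_mem_range_of_apply_apply_eq_zero hP hQ x.2 hQP
  exact Subtype.ext (LinearMap.disjoint_ker.mp hker x x.2 hPx)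

theorem closure_image_range_eq_range (hP : IsStarProjection P) (hQ : IsStarProjection Q)
    (h : P.range ⊓ Q.rangeᗮ = ⊥) : closure (P '' Q.range) = P.range := by
  have horth : (P ∘L Q).rangeᗮ = P.rangeᗮ := by
    rw [orthogonal_range, adjoint_comp, hP.2.adjoint_eq, hQ.2.adjoint_eq,
      IsStarProjection.orthogonal_range_eq_ker hP]
    ext x
    refine ⟨fun hx => ?_, fun hx => by simp_all⟩
    have hPx : P x ∈ P.range ⊓ Q.rangeᗮ := ⟨LinearMap.mem_range_self _ x, by
      rw [IsStarProjection.orthogonal_range_eq_ker hQ]; exact hx⟩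
    rw [h] at hPx
    exact (Submodule.mem_bot 𝕜).mp hPx
  have himage : P '' Q.range = ((P ∘L Q).range : Set E) := by
    rw [toLinearMap_comp, LinearMap.range_comp, Submodule.map_coe]; rfl
  rw [himage, ← Submodule.topologicalClosure_coe, ← Submodule.orthogonal_orthogonal_eq_closure,
    horth, Submodule.orthogonal_orthogonal_eq_closure,
    (IsIdempotentElem.isClosed_range hP.1).submodule_topologicalClosure_eq]

theorem not_isClosed_image_range (hP : IsStarProjection P) (hQ : IsStarProjection Q)
    (hnorm : ‖(1 - P) ∘L Q‖ = 1) (hinj : Set.InjOn P Q.range) :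
    ¬ IsClosed (P '' Q.range) := by
  have : CompleteSpace Q.range := (IsIdempotentElem.isClosed_range hQ.1).completeSpace_coe
  intro hclosed
  have hrange : Set.range (P ∘L Q.range.subtypeL) = P '' Q.range := by
    rw [coe_comp, Set.range_comp]
    congr 1
    exact Subtype.range_coe
  obtain ⟨K, hK⟩ := ((P ∘L Q.range.subtypeL).isClosed_range_iff_antilipschitz_of_injective
    hinj.injective).mp (hrange ▸ hclosed)
  exact (norm_one_sub_comp_lt_one_of_antilipschitz hP hQ hK).ne hnorm

end ContinuousLinearMap

theorem proper_dense_image_of_norm_eq_one_general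
    {E : Type*} [NormedAddCommGroup E] [InnerProductSpace ℂ E] [CompleteSpace E]
    (P : E →L[ℂ] E) (hP_proj : P ∘L P = P) (hP_sa : IsSelfAdjoint P)
    (Q : E →L[ℂ] E) (hQ_proj : Q ∘L Q = Q) (hQ_sa : IsSelfAdjoint Q)
    (hgen2 : LinearMap.range (P : E →ₗ[ℂ] E) ⊓ (LinearMap.range (Q : E →ₗ[ℂ] E))ᗮ = ⊥)
    (hgen3 : (LinearMap.range (P : E →ₗ[ℂ] E))ᗮ ⊓ LinearMap.range (Q : E →ₗ[ℂ] E) = ⊥)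
    (hδ' : ‖(1 - P) ∘L Q‖ = 1)
    -- `A` is the restriction of `Q P⊥ Q` to the subspace `𝔮 = ran Q`
    (A : ↥(LinearMap.range (Q : E →ₗ[ℂ] E)) →L[ℂ] ↥(LinearMap.range (Q : E →ₗ[ℂ] E)))
    (hA : ∀ x : ↥(LinearMap.range (Q : E →ₗ[ℂ] E)), (A x : E) = Q ((1 - P) (x : E))) :
    (1 : ℂ) ∈ spectrum ℂ A ∧
    (∀ x : ↥(LinearMap.range (Q : E →ₗ[ℂ] E)), A x = x → x = 0) ∧
    Set.InjOn P (LinearMap.range (Q : E →ₗ[ℂ] E) : Set E) ∧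
    closure (P '' (LinearMap.range (Q : E →ₗ[ℂ] E) : Set E)) = (LinearMap.range (P : E →ₗ[ℂ] E) : Set E) ∧
    P '' (LinearMap.range (Q : E →ₗ[ℂ] E) : Set E) ≠ (LinearMap.range (P : E →ₗ[ℂ] E) : Set E) ∧
    ¬ IsClosed (P '' (LinearMap.range (Q : E →ₗ[ℂ] E) : Set E)) := by
  have hP : IsStarProjection P := ⟨hP_proj, hP_sa⟩
  have hQ : IsStarProjection Q := ⟨hQ_proj, hQ_sa⟩
  have hker : Disjoint Q.range P.ker := by
    rw [disjoint_iff, inf_comm, ← ContinuousLinearMap.IsStarProjection.orthogonal_range_eq_ker hP,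
      hgen3]
  have hinj : Set.InjOn P Q.range := LinearMap.disjoint_ker_iff_injOn.mp hker
  have hnot_closed := ContinuousLinearMap.not_isClosed_image_range hP hQ hδ' hinj
  refine ⟨ContinuousLinearMap.one_mem_spectrum_of_norm_eq_one hP hQ hA hδ',
    fun x => ContinuousLinearMap.eq_zero_of_apply_eq_self hP hQ hA hker, hinj,
    ContinuousLinearMap.closure_image_range_eq_range hP hQ hgen2,
    fun h => hnot_closed (h ▸ ContinuousLinearMap.IsIdempotentElem.isClosed_range hP_proj),
    hnot_closed⟩

/-- Proposition 4.6 (`Fall=1`), for the map (6): if `𝔭, 𝔮` are in generic position and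
`‖PQ‖ = ‖P⊥Q‖ = 1`, then `1` lies in the spectrum of `A = QP⊥Q` restricted to `𝔮` but is not
an eigenvalue, and `P𝔮` is a proper dense (hence non-closed) subspace of `𝔭`; in particular
`P : 𝔮 → 𝔭` is injective with dense non-closed range, i.e. it has an unbounded inverse. -/
theorem proper_dense_image_of_norm_eq_one
    {E : Type*} [NormedAddCommGroup E] [InnerProductSpace ℂ E] [CompleteSpace E]
    (P : E →L[ℂ] E) (hP_proj : P ∘L P = P) (hP_sa : IsSelfAdjoint P)
    (Q : E →L[ℂ] E) (hQ_proj : Q ∘L Q = Q) (hQ_sa : IsSelfAdjoint Q)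
    (hgen1 : LinearMap.range (P : E →ₗ[ℂ] E) ⊓ LinearMap.range (Q : E →ₗ[ℂ] E) = ⊥)
    (hgen2 : LinearMap.range (P : E →ₗ[ℂ] E) ⊓ (LinearMap.range (Q : E →ₗ[ℂ] E))ᗮ = ⊥)
    (hgen3 : (LinearMap.range (P : E →ₗ[ℂ] E))ᗮ ⊓ LinearMap.range (Q : E →ₗ[ℂ] E) = ⊥)
    (hgen4 : (LinearMap.range (P : E →ₗ[ℂ] E))ᗮ ⊓ (LinearMap.range (Q : E →ₗ[ℂ] E))ᗮ = ⊥)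
    (hδ : ‖P ∘L Q‖ = 1) (hδ' : ‖(1 - P) ∘L Q‖ = 1)
    -- `A` is the restriction of `Q P⊥ Q` to the subspace `𝔮 = ran Q`
    (A : ↥(LinearMap.range (Q : E →ₗ[ℂ] E)) →L[ℂ] ↥(LinearMap.range (Q : E →ₗ[ℂ] E)))
    (hA : ∀ x : ↥(LinearMap.range (Q : E →ₗ[ℂ] E)), (A x : E) = Q ((1 - P) (x : E))) :
    (1 : ℂ) ∈ spectrum ℂ A ∧
    (∀ x : ↥(LinearMap.range (Q : E →ₗ[ℂ] E)), A x = x → x = 0) ∧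
    Set.InjOn P (LinearMap.range (Q : E →ₗ[ℂ] E) : Set E) ∧
    closure (P '' (LinearMap.range (Q : E →ₗ[ℂ] E) : Set E)) = (LinearMap.range (P : E →ₗ[ℂ] E) : Set E) ∧
    P '' (LinearMap.range (Q : E →ₗ[ℂ] E) : Set E) ≠ (LinearMap.range (P : E →ₗ[ℂ] E) : Set E) ∧
    ¬ IsClosed (P '' (LinearMap.range (Q : E →ₗ[ℂ] E) : Set E)) :=
  proper_dense_image_of_norm_eq_one_general P hP_proj hP_sa Q hQ_proj hQ_sa hgen2 hgen3 hδ' A hA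
end

section
/- Let Γ be an anti-unitary involution on a complex Hilbert space 𝔥, P a basis projection (P + ΓPΓ = 1) with range 𝔭, and 𝔮 a closed Γ-invariant subspace such that 𝔭 and 𝔮 are in generic position. Define the anti-linear operators β, α on 𝔭 by gra β := {(Pq, PΓq) : q ∈ 𝔮} and gra α := {(Pq^⊥, −PΓq^⊥) : q^⊥ ∈ 𝔮^⊥}. Then α and β are anti-linear, injective, closed, with dense domains and images dom α = ima α = P(𝔮^⊥), dom β = ima β = P𝔮; moreover α² = id on P(𝔮^⊥), β² = id on P𝔮, and α = β*. -/
/-!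
Because `ΓPΓ = 1 - P`, the map `(u, v) ↦ u + Γ v` identifies `𝔭 × 𝔭` with `𝔥`, with inverse
`q ↦ (Pq, PΓq)`. Hence `gra β = {(u, v) ∈ 𝔭 × 𝔭 : u + Γ v ∈ 𝔮}`, and `gra α` is the same set
built from `-Γ` and `𝔮ᗮ`. In this picture linearity and closedness are immediate,
single-valuedness amounts to `𝔭ᗮ ∩ 𝔮 = 0` (resp. `𝔭ᗮ ∩ 𝔮ᗮ = 0`), `β² = id` to `Γ𝔮 = 𝔮`, and
`α = β*` to the identity `⟪u - Γv, Γq⟫ = ⟪u, PΓq⟫ - ⟪Pq, v⟫` for `u, v ∈ 𝔭`. Finally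
`(P𝔮)ᗮ = 𝔭ᗮ` as soon as `𝔭 ∩ 𝔮ᗮ = 0`, which gives the density of `P𝔮` in `𝔭`.
-/

open scoped ComplexInnerProductSpace

theorem Set.image_snd_eq_image_fst_of_swap_mem {α : Type*} {G : Set (α × α)}
    (hG : ∀ z ∈ G, z.swap ∈ G) : Prod.snd '' G = Prod.fst '' G := by
  ext x
  constructor <;> rintro ⟨z, hz, rfl⟩ <;> exact ⟨z.swap, hG z hz, rfl⟩

section

variable {E : Type*} [NormedAddCommGroup E] [InnerProductSpace ℂ E] {Γ : E →ₗ⋆[ℂ] E}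

section Conjugation

theorem norm_map_of_inner_map_map (hΓ : ∀ x y, ⟪Γ x, Γ y⟫ = ⟪y, x⟫) (x : E) :
    ‖Γ x‖ = ‖x‖ := by
  rw [norm_eq_sqrt_re_inner (𝕜 := ℂ), norm_eq_sqrt_re_inner (𝕜 := ℂ), hΓ]

theorem continuous_of_inner_map_map (hΓ : ∀ x y, ⟪Γ x, Γ y⟫ = ⟪y, x⟫) : Continuous Γ :=
  (AddMonoidHomClass.isometry_of_norm Γ (norm_map_of_inner_map_map hΓ)).continuous

theorem inner_map_left_comm (hΓ : ∀ x y, ⟪Γ x, Γ y⟫ = ⟪y, x⟫) (hΓΓ : Function.Involutive Γ)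
    (x y : E) : ⟪Γ x, y⟫ = ⟪Γ y, x⟫ := by
  simpa only [hΓΓ y] using hΓ x (Γ y)

theorem mapsTo_orthogonal (hΓ : ∀ x y, ⟪Γ x, Γ y⟫ = ⟪y, x⟫) (hΓΓ : Function.Involutive Γ)
    {S : Submodule ℂ E} (hSΓ : Set.MapsTo Γ S S) : Set.MapsTo Γ Sᗮ Sᗮ := fun x hx =>
  (S.mem_orthogonal' _).2 fun u hu => by
    rw [inner_map_left_comm hΓ hΓΓ, S.inner_right_of_mem_orthogonal (hSΓ hu) hx]

theorem mem_orthogonal_iff_inner_map (hΓΓ : Function.Involutive Γ) {S : Submodule ℂ E}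
    (hSΓ : Set.MapsTo Γ S S) {x : E} : x ∈ Sᗮ ↔ ∀ q ∈ S, ⟪x, Γ q⟫ = 0 := by
  rw [S.mem_orthogonal']
  refine ⟨fun h q hq => h _ (hSΓ hq), fun h q hq => ?_⟩
  simpa only [hΓΓ q] using h _ (hSΓ hq)

end Conjugation

/-- For a basis projection `P` onto `K`, `(u, v) ↦ u + Γ v` is a bijection `K × K → E` with
inverse `q ↦ (P q, P (Γ q))`, so `basisGraph K Γ S` is the image of `S` under that inverse. -/
def basisGraph (K : Submodule ℂ E) (Γ : E →ₗ⋆[ℂ] E) (S : Set E) : Set (E × E) :=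
  {z | z.1 ∈ K ∧ z.2 ∈ K ∧ z.1 + Γ z.2 ∈ S}

section Graph

variable {K S : Submodule ℂ E}

theorem add_mem_basisGraph {z w : E × E} (hz : z ∈ basisGraph K Γ S)
    (hw : w ∈ basisGraph K Γ S) : z + w ∈ basisGraph K Γ S :=
  ⟨K.add_mem hz.1 hw.1, K.add_mem hz.2.1 hw.2.1, by
    simpa only [Prod.fst_add, Prod.snd_add, map_add, add_add_add_comm, SetLike.mem_coe] using
      S.add_mem hz.2.2 hw.2.2⟩

theorem conj_smul_mem_basisGraph {z : E × E} (hz : z ∈ basisGraph K Γ S) (c : ℂ) :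
    (c • z.1, starRingEnd ℂ c • z.2) ∈ basisGraph K Γ S :=
  ⟨K.smul_mem c hz.1, K.smul_mem _ hz.2.1, by
    simpa only [map_smulₛₗ, Complex.conj_conj, smul_add, SetLike.mem_coe] using
      S.smul_mem c hz.2.2⟩

theorem swap_mem_basisGraph (hΓΓ : Function.Involutive Γ) (hSΓ : Set.MapsTo Γ S S)
    {z : E × E} (hz : z ∈ basisGraph K Γ S) : z.swap ∈ basisGraph K Γ S :=
  ⟨hz.2.1, hz.1, by
    simpa only [Prod.fst_swap, Prod.snd_swap, map_add, hΓΓ z.2, add_comm] using hSΓ hz.2.2⟩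

theorem isClosed_basisGraph (hΓ : Continuous Γ) (hK : IsClosed (K : Set E))
    (hS : IsClosed (S : Set E)) : IsClosed (basisGraph K Γ S) :=
  (hK.preimage continuous_fst).inter <| (hK.preimage continuous_snd).inter <|
    hS.preimage (continuous_fst.add (hΓ.comp continuous_snd))

end Graph

section BasisProjection

variable {K : Submodule ℂ E} [K.HasOrthogonalProjection]

theorem Submodule.isClosed_of_hasOrthogonalProjection : IsClosed (K : Set E) :=
  K.orthogonal_orthogonal ▸ Kᗮ.isClosed_orthogonal

theorem closure_image_starProjection [CompleteSpace E] {S : Submodule ℂ E}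
    (hKS : K ⊓ Sᗮ = ⊥) : closure (K.starProjection '' S) = K := by
  have horth : (S.map (K.starProjection : E →ₗ[ℂ] E))ᗮ = Kᗮ := by
    ext x
    have hmap : x ∈ (S.map (K.starProjection : E →ₗ[ℂ] E))ᗮ ↔ K.starProjection x ∈ Sᗮ := by
      simp only [Submodule.mem_orthogonal, Submodule.mem_map, forall_exists_index, and_imp,
        forall_apply_eq_imp_iff₂, ContinuousLinearMap.coe_coe,
        K.inner_starProjection_left_eq_right]
    rw [hmap, ← K.starProjection_apply_eq_zero_iff]
    refine ⟨fun h => ?_, fun h => h ▸ Sᗮ.zero_mem⟩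
    simpa only [hKS, Submodule.mem_bot] using
      Submodule.mem_inf.2 ⟨K.starProjection_apply_mem x, h⟩
  change closure (S.map (K.starProjection : E →ₗ[ℂ] E) : Set E) = K
  rw [← Submodule.topologicalClosure_coe, ← Submodule.orthogonal_orthogonal_eq_closure, horth,
    K.orthogonal_orthogonal]

variable (Γ K) in
structure IsBasisProjection : Prop where
  involutive : Function.Involutive Γ
  starProjection_add_map_starProjection_map :
    ∀ x, K.starProjection x + Γ (K.starProjection (Γ x)) = x

namespace IsBasisProjection

theorem neg (hΓ : IsBasisProjection Γ K) : IsBasisProjection (-Γ) K where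
  involutive x := by simp [hΓ.involutive x]
  starProjection_add_map_starProjection_map x := by
    simpa using hΓ.starProjection_add_map_starProjection_map x

theorem map_mem_orthogonal (hΓ : IsBasisProjection Γ K) {x : E} (hx : x ∈ K) : Γ x ∈ Kᗮ := by
  have h := hΓ.starProjection_add_map_starProjection_map (Γ x)
  rwa [hΓ.involutive x, K.starProjection_eq_self_iff.2 hx, add_eq_right,
    K.starProjection_apply_eq_zero_iff] at h

theorem basisGraph_eq_image (hΓ : IsBasisProjection Γ K) (S : Set E) :
    basisGraph K Γ S = (fun q => (K.starProjection q, K.starProjection (Γ q))) '' S := by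
  ext ⟨u, v⟩
  constructor
  · rintro ⟨hu, hv, hS⟩
    refine ⟨u + Γ v, hS, ?_⟩
    have hPΓ : ∀ {y}, y ∈ K → K.starProjection (Γ y) = 0 := fun hy =>
      K.starProjection_apply_eq_zero_iff.2 (hΓ.map_mem_orthogonal hy)
    simp only [map_add, hΓ.involutive v, hPΓ hu, hPΓ hv, K.starProjection_eq_self_iff.2 hu,
      K.starProjection_eq_self_iff.2 hv, add_zero, zero_add]
  · rintro ⟨q, hq, hz⟩
    obtain ⟨rfl, rfl⟩ := Prod.ext_iff.1 hz.symm
    exact ⟨K.starProjection_apply_mem q, K.starProjection_apply_mem _,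
      by rwa [hΓ.starProjection_add_map_starProjection_map]⟩

theorem image_fst_basisGraph (hΓ : IsBasisProjection Γ K) (S : Set E) :
    Prod.fst '' basisGraph K Γ S = K.starProjection '' S := by
  rw [hΓ.basisGraph_eq_image, Set.image_image]

variable {S : Submodule ℂ E}

theorem image_snd_basisGraph (hΓ : IsBasisProjection Γ K) (hSΓ : Set.MapsTo Γ S S) :
    Prod.snd '' basisGraph K Γ S = K.starProjection '' S := by
  rw [Set.image_snd_eq_image_fst_of_swap_mem fun _ => swap_mem_basisGraph hΓ.involutive hSΓ,
    hΓ.image_fst_basisGraph]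

theorem snd_eq_of_fst_eq (hΓ : IsBasisProjection Γ K) (hS : Kᗮ ⊓ S = ⊥) {z w : E × E}
    (hz : z ∈ basisGraph K Γ S) (hw : w ∈ basisGraph K Γ S) (h : z.1 = w.1) : z.2 = w.2 := by
  have hmem : Γ (z.2 - w.2) ∈ Kᗮ ⊓ S := by
    refine ⟨hΓ.map_mem_orthogonal (K.sub_mem hz.2.1 hw.2.1), ?_⟩
    have e : Γ (z.2 - w.2) = (z.1 + Γ z.2) - (w.1 + Γ w.2) := by rw [map_sub, h]; abel
    exact e ▸ S.sub_mem hz.2.2 hw.2.2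
  rw [hS, Submodule.mem_bot] at hmem
  exact sub_eq_zero.1 (hΓ.involutive.injective (hmem.trans (map_zero Γ).symm))

theorem fst_eq_of_snd_eq (hΓ : IsBasisProjection Γ K) (hS : Kᗮ ⊓ S = ⊥)
    (hSΓ : Set.MapsTo Γ S S) {z w : E × E} (hz : z ∈ basisGraph K Γ S)
    (hw : w ∈ basisGraph K Γ S) (h : z.2 = w.2) : z.1 = w.1 :=
  hΓ.snd_eq_of_fst_eq hS (swap_mem_basisGraph hΓ.involutive hSΓ hz)
    (swap_mem_basisGraph hΓ.involutive hSΓ hw) h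

theorem basisGraph_neg_orthogonal_eq (hΓ : IsBasisProjection Γ K)
    (hΓ_inner : ∀ x y, ⟪Γ x, Γ y⟫ = ⟪y, x⟫) (hSΓ : Set.MapsTo Γ S S) :
    basisGraph K (-Γ) Sᗮ =
      {z | z.1 ∈ K ∧ z.2 ∈ K ∧ ∀ w ∈ basisGraph K Γ S, ⟪z.1, w.2⟫ = ⟪w.1, z.2⟫} := by
  ext ⟨u, v⟩
  simp only [hΓ.basisGraph_eq_image, Set.forall_mem_image]
  simp only [basisGraph, Set.mem_ofPred_eq, SetLike.mem_coe, LinearMap.neg_apply,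
    ← sub_eq_add_neg]
  refine and_congr_right fun hu => and_congr_right fun hv => ?_
  rw [mem_orthogonal_iff_inner_map hΓ.involutive hSΓ]
  refine forall₂_congr fun q _ => ?_
  rw [← K.inner_starProjection_left_eq_right, K.starProjection_eq_self_iff.2 hu,
    K.inner_starProjection_left_eq_right, K.starProjection_eq_self_iff.2 hv, ← hΓ_inner v q,
    inner_sub_left, sub_eq_zero]

end IsBasisProjection

end BasisProjection

end

theorem alpha_beta_properties_general
    {E : Type*} [NormedAddCommGroup E] [InnerProductSpace ℂ E] [CompleteSpace E]
    (Γ : E → E)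
    (hΓ_add : ∀ x y, Γ (x + y) = Γ x + Γ y)
    (hΓ_smul : ∀ (c : ℂ) (x : E), Γ (c • x) = (starRingEnd ℂ) c • Γ x)
    (hΓ_inner : ∀ f h : E, ⟪Γ f, Γ h⟫ = ⟪h, f⟫)
    (hΓ_inv : ∀ x, Γ (Γ x) = x)
    (P : E →L[ℂ] E) (hP_proj : P ∘L P = P) (hP_sa : IsSelfAdjoint P)
    (hP_basis : ∀ x, P x + Γ (P (Γ x)) = x)
    (Q : E →L[ℂ] E) (hQ_proj : Q ∘L Q = Q)
    (hQΓ : ∀ x, Q (Γ x) = Γ (Q x))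
    (hgen1 : LinearMap.range (P : E →ₗ[ℂ] E) ⊓ LinearMap.range (Q : E →ₗ[ℂ] E) = ⊥)
    (hgen2 : LinearMap.range (P : E →ₗ[ℂ] E) ⊓ (LinearMap.range (Q : E →ₗ[ℂ] E))ᗮ = ⊥)
    (hgen3 : (LinearMap.range (P : E →ₗ[ℂ] E))ᗮ ⊓ LinearMap.range (Q : E →ₗ[ℂ] E) = ⊥)
    (hgen4 : (LinearMap.range (P : E →ₗ[ℂ] E))ᗮ ⊓ (LinearMap.range (Q : E →ₗ[ℂ] E))ᗮ = ⊥)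
    (graβ graα : Set (E × E))
    (hβ : graβ = {z : E × E | ∃ q ∈ LinearMap.range (Q : E →ₗ[ℂ] E), z = (P q, P (Γ q))})
    (hα : graα = {z : E × E | ∃ q' ∈ (LinearMap.range (Q : E →ₗ[ℂ] E))ᗮ, z = (P q', -(P (Γ q')))}) :
    -- graphs of (single-valued) injective maps
    (∀ z ∈ graβ, ∀ w ∈ graβ, z.1 = w.1 → z.2 = w.2) ∧
    (∀ z ∈ graβ, ∀ w ∈ graβ, z.2 = w.2 → z.1 = w.1) ∧
    (∀ z ∈ graα, ∀ w ∈ graα, z.1 = w.1 → z.2 = w.2) ∧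
    (∀ z ∈ graα, ∀ w ∈ graα, z.2 = w.2 → z.1 = w.1) ∧
    -- anti-linearity
    (∀ z ∈ graβ, ∀ w ∈ graβ, z + w ∈ graβ) ∧
    (∀ z ∈ graβ, ∀ c : ℂ, (c • z.1, (starRingEnd ℂ) c • z.2) ∈ graβ) ∧
    (∀ z ∈ graα, ∀ w ∈ graα, z + w ∈ graα) ∧
    (∀ z ∈ graα, ∀ c : ℂ, (c • z.1, (starRingEnd ℂ) c • z.2) ∈ graα) ∧
    -- closedness
    IsClosed graβ ∧ IsClosed graα ∧
    -- domains and images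
    Prod.fst '' graβ = P '' (LinearMap.range (Q : E →ₗ[ℂ] E) : Set E) ∧
    Prod.snd '' graβ = P '' (LinearMap.range (Q : E →ₗ[ℂ] E) : Set E) ∧
    Prod.fst '' graα = P '' ((LinearMap.range (Q : E →ₗ[ℂ] E))ᗮ : Set E) ∧
    Prod.snd '' graα = P '' ((LinearMap.range (Q : E →ₗ[ℂ] E))ᗮ : Set E) ∧
    -- density of the domains in 𝔭
    closure (P '' (LinearMap.range (Q : E →ₗ[ℂ] E) : Set E)) = (LinearMap.range (P : E →ₗ[ℂ] E) : Set E) ∧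
    closure (P '' ((LinearMap.range (Q : E →ₗ[ℂ] E))ᗮ : Set E)) = (LinearMap.range (P : E →ₗ[ℂ] E) : Set E) ∧
    -- β² = id and α² = id on the respective domains
    (∀ z ∈ graβ, (z.2, z.1) ∈ graβ) ∧
    (∀ z ∈ graα, (z.2, z.1) ∈ graα) ∧
    -- α = β* (adjoint of the anti-linear operator β)
    graα = {z : E × E | z.1 ∈ LinearMap.range (P : E →ₗ[ℂ] E) ∧ z.2 ∈ LinearMap.range (P : E →ₗ[ℂ] E) ∧
      ∀ w ∈ graβ, ⟪z.1, w.2⟫ = ⟪w.1, z.2⟫} := by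
  obtain ⟨Γ, rfl⟩ : ∃ Γ' : E →ₗ⋆[ℂ] E, ⇑Γ' = Γ :=
    ⟨{ toFun := Γ, map_add' := hΓ_add, map_smul' := hΓ_smul }, rfl⟩
  obtain ⟨K, _, rfl⟩ := isStarProjection_iff_eq_starProjection.mp ⟨hP_proj, hP_sa⟩
  have := ContinuousLinearMap.IsIdempotentElem.hasOrthogonalProjection_range hQ_proj
  set S := LinearMap.range (Q : E →ₗ[ℂ] E)
  simp only [Submodule.range_starProjection] at hgen1 hgen2 hgen3 hgen4 ⊢
  have hΓ : IsBasisProjection Γ K := ⟨hΓ_inv, hP_basis⟩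
  have hSΓ : Set.MapsTo Γ S S := by rintro _ ⟨y, rfl⟩; exact ⟨Γ y, hQΓ y⟩
  have hSΓ' : Set.MapsTo (-Γ) Sᗮ Sᗮ := fun _ hx =>
    Sᗮ.neg_mem (mapsTo_orthogonal hΓ_inner hΓ_inv hSΓ hx)
  have hΓ_cont := continuous_of_inner_map_map hΓ_inner
  obtain rfl : graβ = basisGraph K Γ S := by
    rw [hβ, hΓ.basisGraph_eq_image]; ext; simp [eq_comm]
  obtain rfl : graα = basisGraph K (-Γ) Sᗮ := by
    rw [hα, hΓ.neg.basisGraph_eq_image]; ext; simp [eq_comm]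
  exact ⟨fun _ hz _ hw => hΓ.snd_eq_of_fst_eq hgen3 hz hw,
    fun _ hz _ hw => hΓ.fst_eq_of_snd_eq hgen3 hSΓ hz hw,
    fun _ hz _ hw => hΓ.neg.snd_eq_of_fst_eq hgen4 hz hw,
    fun _ hz _ hw => hΓ.neg.fst_eq_of_snd_eq hgen4 hSΓ' hz hw,
    fun _ hz _ hw => add_mem_basisGraph hz hw, fun _ hz => conj_smul_mem_basisGraph hz,
    fun _ hz _ hw => add_mem_basisGraph hz hw, fun _ hz => conj_smul_mem_basisGraph hz,
    isClosed_basisGraph hΓ_cont K.isClosed_of_hasOrthogonalProjection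
      S.isClosed_of_hasOrthogonalProjection,
    isClosed_basisGraph (by simpa using hΓ_cont.neg) K.isClosed_of_hasOrthogonalProjection
      S.isClosed_orthogonal,
    hΓ.image_fst_basisGraph _, hΓ.image_snd_basisGraph hSΓ,
    hΓ.neg.image_fst_basisGraph _, hΓ.neg.image_snd_basisGraph hSΓ',
    closure_image_starProjection hgen2,
    closure_image_starProjection (by rwa [S.orthogonal_orthogonal]),
    fun _ => swap_mem_basisGraph hΓ_inv hSΓ, fun _ => swap_mem_basisGraph hΓ.neg.involutive hSΓ',
    hΓ.basisGraph_neg_orthogonal_eq hΓ_inner hSΓ⟩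

/-- Lemma 4.8 (`Alpha`): the anti-linear operators `β` and `α` on `𝔭` with graphs
`gra β = {(Pq, PΓq) : q ∈ 𝔮}` and `gra α = {(Pq⊥, −PΓq⊥) : q⊥ ∈ 𝔮ᗮ}` are anti-linear,
injective, closed, with dense domains and images `dom α = ima α = P𝔮ᗮ`,
`dom β = ima β = P𝔮`; moreover `α² = id`, `β² = id` on the respective domains and `α = β*`. -/
theorem alpha_beta_properties
    {E : Type*} [NormedAddCommGroup E] [InnerProductSpace ℂ E] [CompleteSpace E]
    (Γ : E → E)
    (hΓ_add : ∀ x y, Γ (x + y) = Γ x + Γ y)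
    (hΓ_smul : ∀ (c : ℂ) (x : E), Γ (c • x) = (starRingEnd ℂ) c • Γ x)
    (hΓ_inner : ∀ f h : E, ⟪Γ f, Γ h⟫ = ⟪h, f⟫)
    (hΓ_inv : ∀ x, Γ (Γ x) = x)
    (P : E →L[ℂ] E) (hP_proj : P ∘L P = P) (hP_sa : IsSelfAdjoint P)
    (hP_basis : ∀ x, P x + Γ (P (Γ x)) = x)
    (Q : E →L[ℂ] E) (hQ_proj : Q ∘L Q = Q) (hQ_sa : IsSelfAdjoint Q)
    (hQΓ : ∀ x, Q (Γ x) = Γ (Q x))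
    (hgen1 : LinearMap.range (P : E →ₗ[ℂ] E) ⊓ LinearMap.range (Q : E →ₗ[ℂ] E) = ⊥)
    (hgen2 : LinearMap.range (P : E →ₗ[ℂ] E) ⊓ (LinearMap.range (Q : E →ₗ[ℂ] E))ᗮ = ⊥)
    (hgen3 : (LinearMap.range (P : E →ₗ[ℂ] E))ᗮ ⊓ LinearMap.range (Q : E →ₗ[ℂ] E) = ⊥)
    (hgen4 : (LinearMap.range (P : E →ₗ[ℂ] E))ᗮ ⊓ (LinearMap.range (Q : E →ₗ[ℂ] E))ᗮ = ⊥)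
    (graβ graα : Set (E × E))
    (hβ : graβ = {z : E × E | ∃ q ∈ LinearMap.range (Q : E →ₗ[ℂ] E), z = (P q, P (Γ q))})
    (hα : graα = {z : E × E | ∃ q' ∈ (LinearMap.range (Q : E →ₗ[ℂ] E))ᗮ, z = (P q', -(P (Γ q')))}) :
    -- graphs of (single-valued) injective maps
    (∀ z ∈ graβ, ∀ w ∈ graβ, z.1 = w.1 → z.2 = w.2) ∧
    (∀ z ∈ graβ, ∀ w ∈ graβ, z.2 = w.2 → z.1 = w.1) ∧
    (∀ z ∈ graα, ∀ w ∈ graα, z.1 = w.1 → z.2 = w.2) ∧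
    (∀ z ∈ graα, ∀ w ∈ graα, z.2 = w.2 → z.1 = w.1) ∧
    -- anti-linearity
    (∀ z ∈ graβ, ∀ w ∈ graβ, z + w ∈ graβ) ∧
    (∀ z ∈ graβ, ∀ c : ℂ, (c • z.1, (starRingEnd ℂ) c • z.2) ∈ graβ) ∧
    (∀ z ∈ graα, ∀ w ∈ graα, z + w ∈ graα) ∧
    (∀ z ∈ graα, ∀ c : ℂ, (c • z.1, (starRingEnd ℂ) c • z.2) ∈ graα) ∧
    -- closedness
    IsClosed graβ ∧ IsClosed graα ∧
    -- domains and images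
    Prod.fst '' graβ = P '' (LinearMap.range (Q : E →ₗ[ℂ] E) : Set E) ∧
    Prod.snd '' graβ = P '' (LinearMap.range (Q : E →ₗ[ℂ] E) : Set E) ∧
    Prod.fst '' graα = P '' ((LinearMap.range (Q : E →ₗ[ℂ] E))ᗮ : Set E) ∧
    Prod.snd '' graα = P '' ((LinearMap.range (Q : E →ₗ[ℂ] E))ᗮ : Set E) ∧
    -- density of the domains in 𝔭
    closure (P '' (LinearMap.range (Q : E →ₗ[ℂ] E) : Set E)) = (LinearMap.range (P : E →ₗ[ℂ] E) : Set E) ∧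
    closure (P '' ((LinearMap.range (Q : E →ₗ[ℂ] E))ᗮ : Set E)) = (LinearMap.range (P : E →ₗ[ℂ] E) : Set E) ∧
    -- β² = id and α² = id on the respective domains
    (∀ z ∈ graβ, (z.2, z.1) ∈ graβ) ∧
    (∀ z ∈ graα, (z.2, z.1) ∈ graα) ∧
    -- α = β* (adjoint of the anti-linear operator β)
    graα = {z : E × E | z.1 ∈ LinearMap.range (P : E →ₗ[ℂ] E) ∧ z.2 ∈ LinearMap.range (P : E →ₗ[ℂ] E) ∧
      ∀ w ∈ graβ, ⟪z.1, w.2⟫ = ⟪w.1, z.2⟫} :=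
  alpha_beta_properties_general Γ hΓ_add hΓ_smul hΓ_inner hΓ_inv P hP_proj hP_sa hP_basis Q hQ_proj
    hQΓ hgen1 hgen2 hgen3 hgen4 graβ graα hβ hα
end

section
/- Let P, Q be orthogonal projections with ranges 𝔭, 𝔮 in generic position, and φ: 𝔮 → 𝔮^⊥ the closed operator with graph {(Qp, Q^⊥p) : p ∈ 𝔭}. Then the positive self-adjoint operator φ*φ on 𝔮 has graph gra φ*φ = {(QPq, QP^⊥q) : q ∈ 𝔮}; in particular dom(φ*φ) = QP𝔮. -/
/-!
For `x ∈ 𝔭`, `u ∈ 𝔮ᗮ` and `v ∈ 𝔮` one has `⟪(1 - Q) x, u⟫ - ⟪Q x, v⟫ = ⟪x, u - v⟫`, and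
`𝔭ᗮ = ker P`; hence `(u, v)` lies in the graph of `φ*` exactly when `P u = P v`.
A point of the graph of `φ*φ` therefore comes from some `x ∈ 𝔭` and `v ∈ 𝔮` with
`P ((1 - Q) x) = P v`, i.e. `x = P q` for `q := Q x + v ∈ 𝔮`; then `Q x = QPq` and
`v = q - Q x = QP^⊥q`. Conversely every `q ∈ 𝔮` arises this way from `x := P q`.
-/

open scoped ComplexInnerProductSpace

/-- Composition of two operators given by their graphs (first apply `G`, then `H`). -/
def GraphComp {E : Type*} (G H : Set (E × E)) : Set (E × E) :=
  {z : E × E | ∃ w : E, (z.1, w) ∈ G ∧ (w, z.2) ∈ H}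

open LinearMap Submodule

open scoped InnerProductSpace

namespace LinearMap.IsSymmetricProjection

variable {𝕜 E : Type*} [RCLike 𝕜] [NormedAddCommGroup E] [InnerProductSpace 𝕜 E]
  {p q : E →ₗ[𝕜] E}

theorem map_eq_self_iff (hp : p.IsSymmetricProjection) {x : E} : p x = x ↔ x ∈ range p :=
  hp.isIdempotentElem.mem_range_iff.symm

theorem map_map (hp : p.IsSymmetricProjection) (x : E) : p (p x) = p x :=
  hp.map_eq_self_iff.mpr (mem_range_self p x)

theorem sub_map_mem_orthogonal (hp : p.IsSymmetricProjection) (x : E) :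
    x - p x ∈ (range p)ᗮ := by
  rw [hp.isSymmetric.orthogonal_range, mem_ker, map_sub, hp.map_map, sub_self]

theorem map_eq_map_iff (hp : p.IsSymmetricProjection) {x y : E} :
    p x = p y ↔ x - y ∈ (range p)ᗮ := by
  rw [hp.isSymmetric.orthogonal_range, mem_ker, map_sub, sub_eq_zero]

end LinearMap.IsSymmetricProjection

section

variable {𝕜 E : Type*} [RCLike 𝕜] [NormedAddCommGroup E] [InnerProductSpace 𝕜 E]

/-- The graph of the operator `φ : range q → (range q)ᗮ` sending `q x` to `x - q x` for
`x ∈ range p`. -/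
def projGraph (p q : E →ₗ[𝕜] E) : Set (E × E) :=
  {z | ∃ x ∈ range p, z = (q x, x - q x)}

/-- The graph of the adjoint `U → V` of an operator `V → U` with graph `G`. -/
def adjointGraph (G : Set (E × E)) (U V : Submodule 𝕜 E) : Set (E × E) :=
  {z | z.1 ∈ U ∧ z.2 ∈ V ∧ ∀ w ∈ G, ⟪w.2, z.1⟫_𝕜 = ⟪w.1, z.2⟫_𝕜}

variable {p q : E →ₗ[𝕜] E}

theorem mem_adjointGraph_projGraph_iff (hp : p.IsSymmetricProjection)
    (hq : q.IsSymmetricProjection) {u v : E} :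
    (u, v) ∈ adjointGraph (projGraph p q) (range q)ᗮ (range q) ↔
      u ∈ (range q)ᗮ ∧ v ∈ range q ∧ p u = p v := by
  refine and_congr_right fun hu => and_congr_right fun hv => ?_
  have hinner (x : E) : ⟪x - q x, u⟫_𝕜 - ⟪q x, v⟫_𝕜 = ⟪x, u - v⟫_𝕜 := by
    rw [inner_sub_left, inner_right_of_mem_orthogonal (mem_range_self q x) hu, hq.isSymmetric,
      hq.map_eq_self_iff.mpr hv, inner_sub_right, sub_zero]
  rw [hp.map_eq_map_iff, mem_orthogonal]
  constructor
  · rintro h _ ⟨x, rfl⟩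
    rw [← hinner, h _ ⟨_, mem_range_self p x, rfl⟩, sub_self]
  · rintro h _ ⟨x, hx, rfl⟩
    rw [← sub_eq_zero, hinner, h x hx]

theorem graphComp_projGraph_adjointGraph (hp : p.IsSymmetricProjection)
    (hq : q.IsSymmetricProjection) :
    GraphComp (projGraph p q) (adjointGraph (projGraph p q) (range q)ᗮ (range q)) =
      {z | ∃ y ∈ range q, z = (q (p y), q (y - p y))} := by
  ext ⟨a, b⟩
  simp only [GraphComp, Set.mem_ofPred_eq, mem_adjointGraph_projGraph_iff hp hq]
  simp only [projGraph, Set.mem_ofPred_eq, Prod.mk.injEq]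
  constructor
  · rintro ⟨_, ⟨x, hx, rfl, rfl⟩, -, hb, hpb⟩
    have hxy : p (q x + b) = x := by
      rw [map_add, ← hpb, map_sub, hp.map_eq_self_iff.mpr hx]
      abel
    refine ⟨q x + b, add_mem (mem_range_self q x) hb, by rw [hxy], ?_⟩
    rw [hxy, map_sub, map_add, hq.map_map, hq.map_eq_self_iff.mpr hb]
    abel
  · rintro ⟨y, hy, rfl, rfl⟩
    rw [← hq.map_eq_self_iff] at hy
    refine ⟨p y - q (p y), ⟨p y, mem_range_self p y, rfl, rfl⟩, hq.sub_map_mem_orthogonal _,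
      mem_range_self q _, ?_⟩
    rw [map_sub, map_sub, map_sub, hy, hp.map_map]

end

theorem graph_phi_star_phi_general
    {E : Type*} [NormedAddCommGroup E] [InnerProductSpace ℂ E] [CompleteSpace E]
    (P : E →L[ℂ] E) (hP_proj : P ∘L P = P) (hP_sa : IsSelfAdjoint P)
    (Q : E →L[ℂ] E) (hQ_proj : Q ∘L Q = Q) (hQ_sa : IsSelfAdjoint Q)
    (graφ graφstar : Set (E × E))
    (hφ : graφ = {z : E × E | ∃ p ∈ LinearMap.range (P : E →ₗ[ℂ] E), z = (Q p, (1 - Q) p)})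
    -- graph of the adjoint `φ* : 𝔮ᗮ → 𝔮`
    (hφstar : graφstar = {z : E × E | z.1 ∈ (LinearMap.range (Q : E →ₗ[ℂ] E))ᗮ ∧ z.2 ∈ LinearMap.range (Q : E →ₗ[ℂ] E) ∧
      ∀ w ∈ graφ, ⟪w.2, z.1⟫ = ⟪w.1, z.2⟫}) :
    GraphComp graφ graφstar
      = {z : E × E | ∃ q ∈ LinearMap.range (Q : E →ₗ[ℂ] E), z = (Q (P q), Q ((1 - P) q))} ∧
    Prod.fst '' GraphComp graφ graφstar
      = Q '' (P '' (LinearMap.range (Q : E →ₗ[ℂ] E) : Set E)) := by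
  have hP := ContinuousLinearMap.IsStarProjection.isSymmetricProjection ⟨hP_proj, hP_sa⟩
  have hQ := ContinuousLinearMap.IsStarProjection.isSymmetricProjection ⟨hQ_proj, hQ_sa⟩
  obtain rfl : graφstar =
    adjointGraph graφ (range (Q : E →ₗ[ℂ] E))ᗮ (range (Q : E →ₗ[ℂ] E)) := hφstar
  obtain rfl : graφ = projGraph (P : E →ₗ[ℂ] E) Q := by simp [hφ, projGraph]
  have hcomp := graphComp_projGraph_adjointGraph hP hQ
  simp only [ContinuousLinearMap.coe_coe] at hcomp
  refine ⟨by simpa using hcomp, ?_⟩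
  rw [hcomp]
  ext
  simp [eq_comm]

/-- Proposition 4.11 (`Provarphi*varphi`): for `φ` with graph `{(Qp, Q⊥p) : p ∈ 𝔭}` (with
`𝔭, 𝔮` in generic position), the positive self-adjoint operator `φ*φ` on `𝔮` has graph
`{(QPq, QP⊥q) : q ∈ 𝔮}`; in particular `dom (φ*φ) = QP𝔮`. -/
theorem graph_phi_star_phi
    {E : Type*} [NormedAddCommGroup E] [InnerProductSpace ℂ E] [CompleteSpace E]
    (P : E →L[ℂ] E) (hP_proj : P ∘L P = P) (hP_sa : IsSelfAdjoint P)
    (Q : E →L[ℂ] E) (hQ_proj : Q ∘L Q = Q) (hQ_sa : IsSelfAdjoint Q)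
    (hgen1 : LinearMap.range (P : E →ₗ[ℂ] E) ⊓ LinearMap.range (Q : E →ₗ[ℂ] E) = ⊥)
    (hgen2 : LinearMap.range (P : E →ₗ[ℂ] E) ⊓ (LinearMap.range (Q : E →ₗ[ℂ] E))ᗮ = ⊥)
    (hgen3 : (LinearMap.range (P : E →ₗ[ℂ] E))ᗮ ⊓ LinearMap.range (Q : E →ₗ[ℂ] E) = ⊥)
    (hgen4 : (LinearMap.range (P : E →ₗ[ℂ] E))ᗮ ⊓ (LinearMap.range (Q : E →ₗ[ℂ] E))ᗮ = ⊥)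
    (graφ graφstar : Set (E × E))
    (hφ : graφ = {z : E × E | ∃ p ∈ LinearMap.range (P : E →ₗ[ℂ] E), z = (Q p, (1 - Q) p)})
    -- graph of the adjoint `φ* : 𝔮ᗮ → 𝔮`
    (hφstar : graφstar = {z : E × E | z.1 ∈ (LinearMap.range (Q : E →ₗ[ℂ] E))ᗮ ∧ z.2 ∈ LinearMap.range (Q : E →ₗ[ℂ] E) ∧
      ∀ w ∈ graφ, ⟪w.2, z.1⟫ = ⟪w.1, z.2⟫}) :
    GraphComp graφ graφstar
      = {z : E × E | ∃ q ∈ LinearMap.range (Q : E →ₗ[ℂ] E), z = (Q (P q), Q ((1 - P) q))} ∧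
    Prod.fst '' GraphComp graφ graφstar
      = Q '' (P '' (LinearMap.range (Q : E →ₗ[ℂ] E) : Set E)) :=
  graph_phi_star_phi_general P hP_proj hP_sa Q hQ_proj hQ_sa graφ graφstar hφ hφstar
end

section
/- With Δ_𝔭 the positive self-adjoint operator on 𝔭 = P𝔥 with graph {(PQp, PQ^⊥p) : p ∈ 𝔭} (P, Q in generic position), the map W: 𝔮 → 𝔭 defined by Wq := (1 + Δ_𝔭)^{1/2} Pq is a surjective isometry from 𝔮 onto 𝔭. -/
/-! Write `B` for `(1 + Δ_𝔭)^{1/2}`, viewed as the relation `graB`. Since `B²` sends `PQp` to `p`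
for `p ∈ 𝔭`, `B` is injective, and `(a, b) ∈ B` forces `(PQb, a) ∈ B`: on `Q𝔭`,
`W (Q b) = B⁻¹ b`, and `‖B⁻¹ b‖² = ⟪B⁻² b, b⟫ = ⟪PQb, b⟫ = ‖Qb‖²`. So `W` is isometric on `Q𝔭`,
which is dense in `𝔮` since `𝔭ᗮ ⊓ 𝔮 = ⊥`; as the graph of `B` is closed, `W` extends
isometrically to all of `𝔮`, and it is single-valued since `𝔭 ⊓ 𝔮ᗮ = ⊥`. Dually, the range of
`W` contains the domain of `B`, which is dense in `𝔭` because `B` is self-adjoint and injective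
on `𝔭`, and it is closed because `W` is isometric. -/

open scoped ComplexInnerProductSpace

/-- `G` is the graph of a positive self-adjoint operator on the subspace `𝔰`. -/
def IsPosSelfAdjGraph {E : Type*} [NormedAddCommGroup E] [InnerProductSpace ℂ E]
    (𝔰 : Submodule ℂ E) (G : Set (E × E)) : Prop :=
  (∀ z ∈ G, 0 ≤ (⟪z.1, z.2⟫ : ℂ).re ∧ (⟪z.1, z.2⟫ : ℂ).im = 0) ∧
  G = {z : E × E | z.1 ∈ 𝔰 ∧ z.2 ∈ 𝔰 ∧ ∀ w ∈ G, ⟪w.2, z.1⟫ = ⟪w.1, z.2⟫}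

open scoped InnerProductSpace
open Filter Topology

theorem Submodule.le_topologicalClosure_of_orthogonal_inf_eq_bot {𝕜 E : Type*} [RCLike 𝕜]
    [NormedAddCommGroup E] [InnerProductSpace 𝕜 E] [CompleteSpace E] {K L : Submodule 𝕜 E}
    (hL : IsClosed (L : Set E)) (hKL : K ≤ L) (h : Kᗮ ⊓ L = ⊥) : L ≤ K.topologicalClosure := by
  have := K.isClosed_topologicalClosure.completeSpace_coe
  have hsup := sup_orthogonal_inf_of_hasOrthogonalProjection (K.topologicalClosure_minimal hKL hL)
  rw [orthogonal_closure, h, sup_bot_eq] at hsup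
  exact hsup.ge

theorem Submodule.exists_prodMk_mem_closure_of_norm_le {R E F : Type*} [Ring R]
    [NormedAddCommGroup E] [NormedAddCommGroup F] [Module R E] [Module R F] [CompleteSpace F]
    {Γ : Submodule R (E × F)} (hΓ : ∀ z ∈ Γ, ‖z.2‖ ≤ ‖z.1‖) {x : E}
    (hx : x ∈ closure (Prod.fst '' (Γ : Set (E × F)))) :
    ∃ y, (x, y) ∈ closure (Γ : Set (E × F)) := by
  obtain ⟨u, hu, hux⟩ := mem_closure_iff_seq_limit.1 hx
  choose z hzΓ hzu using hu
  have hCauchy : CauchySeq fun n => (z n).2 := by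
    refine Metric.cauchySeq_iff.2 fun ε hε => (Metric.cauchySeq_iff.1 hux.cauchySeq ε hε).imp
      fun N hN m hm n hn => ?_
    calc dist (z m).2 (z n).2 = ‖(z m - z n).2‖ := dist_eq_norm _ _
      _ ≤ ‖(z m - z n).1‖ := hΓ _ (Γ.sub_mem (hzΓ m) (hzΓ n))
      _ = dist (u m) (u n) := by rw [dist_eq_norm, ← hzu m, ← hzu n, Prod.fst_sub]
      _ < ε := hN m hm n hn
  obtain ⟨y, hy⟩ := cauchySeq_tendsto_of_complete hCauchy
  have hzx : Tendsto (fun n => (z n).1) atTop (𝓝 x) := hux.congr fun n => (hzu n).symm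
  exact ⟨y, mem_closure_of_tendsto (hzx.prodMk_nhds hy) (Eventually.of_forall hzΓ)⟩

section SelfAdjGraph

variable {𝕜 E : Type*} [RCLike 𝕜] [NormedAddCommGroup E] [InnerProductSpace 𝕜 E]

def IsSelfAdjGraph (𝔰 : Submodule 𝕜 E) (G : Set (E × E)) : Prop :=
  G = {z : E × E | z.1 ∈ 𝔰 ∧ z.2 ∈ 𝔰 ∧ ∀ w ∈ G, ⟪w.2, z.1⟫_𝕜 = ⟪w.1, z.2⟫_𝕜}

namespace IsSelfAdjGraph

variable {𝔰 : Submodule 𝕜 E} {G : Set (E × E)} {z w : E × E}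

theorem mem_iff (hG : IsSelfAdjGraph 𝔰 G) :
    z ∈ G ↔ z.1 ∈ 𝔰 ∧ z.2 ∈ 𝔰 ∧ ∀ w ∈ G, ⟪w.2, z.1⟫_𝕜 = ⟪w.1, z.2⟫_𝕜 :=
  Set.ext_iff.1 hG z

theorem fst_mem (hG : IsSelfAdjGraph 𝔰 G) (hz : z ∈ G) : z.1 ∈ 𝔰 :=
  (hG.mem_iff.1 hz).1

theorem snd_mem (hG : IsSelfAdjGraph 𝔰 G) (hz : z ∈ G) : z.2 ∈ 𝔰 :=
  (hG.mem_iff.1 hz).2.1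

theorem inner_eq (hG : IsSelfAdjGraph 𝔰 G) (hz : z ∈ G) (hw : w ∈ G) :
    ⟪w.2, z.1⟫_𝕜 = ⟪w.1, z.2⟫_𝕜 :=
  (hG.mem_iff.1 hz).2.2 w hw

def toSubmodule (hG : IsSelfAdjGraph 𝔰 G) : Submodule 𝕜 (E × E) where
  carrier := G
  add_mem' {z w} hz hw := hG.mem_iff.2 ⟨add_mem (hG.fst_mem hz) (hG.fst_mem hw),
    add_mem (hG.snd_mem hz) (hG.snd_mem hw), fun u hu => by
      simp only [Prod.fst_add, Prod.snd_add, inner_add_right, hG.inner_eq hz hu,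
        hG.inner_eq hw hu]⟩
  zero_mem' := hG.mem_iff.2 ⟨zero_mem _, zero_mem _, fun u _ => by simp⟩
  smul_mem' c z hz := hG.mem_iff.2 ⟨Submodule.smul_mem _ c (hG.fst_mem hz),
    Submodule.smul_mem _ c (hG.snd_mem hz), fun u hu => by
      simp only [Prod.smul_fst, Prod.smul_snd, inner_smul_right, hG.inner_eq hz hu]⟩

@[simp]
theorem mem_toSubmodule (hG : IsSelfAdjGraph 𝔰 G) : z ∈ hG.toSubmodule ↔ z ∈ G :=
  Iff.rfl

theorem isClosed (hG : IsSelfAdjGraph 𝔰 G) (h𝔰 : IsClosed (𝔰 : Set E)) : IsClosed G := by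
  rw [hG]
  simp only [Set.ofPred_and, Set.ofPred_forall]
  exact (h𝔰.preimage continuous_fst).inter ((h𝔰.preimage continuous_snd).inter
    (isClosed_biInter fun w _ => isClosed_eq (by fun_prop) (by fun_prop)))

theorem zero_prodMk_mem (hG : IsSelfAdjGraph 𝔰 G) {x : E} (hx : x ∈ 𝔰)
    (hxG : ∀ w ∈ G, ⟪w.1, x⟫_𝕜 = 0) : (0, x) ∈ G :=
  hG.mem_iff.2 ⟨zero_mem _, hx, fun w hw => by simp [hxG w hw]⟩

theorem fst_eq_zero (hG : IsSelfAdjGraph 𝔰 G) (hran : ∀ s ∈ 𝔰, ∃ w, (w, s) ∈ G) {u : E}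
    (hu : (u, 0) ∈ G) : u = 0 := by
  obtain ⟨w, hw⟩ := hran u (hG.fst_mem hu)
  simpa using hG.inner_eq hu hw

theorem fst_eq_fst (hG : IsSelfAdjGraph 𝔰 G) (hran : ∀ s ∈ 𝔰, ∃ w, (w, s) ∈ G) {a a' b : E}
    (ha : (a, b) ∈ G) (ha' : (a', b) ∈ G) : a = a' :=
  sub_eq_zero.1 <| hG.fst_eq_zero hran <| by simpa using hG.toSubmodule.sub_mem ha ha'

end IsSelfAdjGraph

end SelfAdjGraph

theorem IsPosSelfAdjGraph.isSelfAdjGraph {E : Type*} [NormedAddCommGroup E]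
    [InnerProductSpace ℂ E] {𝔰 : Submodule ℂ E} {G : Set (E × E)} (hG : IsPosSelfAdjGraph 𝔰 G) :
    IsSelfAdjGraph 𝔰 G :=
  hG.2

section StarProjection

variable {𝕜 E : Type*} [RCLike 𝕜] [NormedAddCommGroup E] [InnerProductSpace 𝕜 E] [CompleteSpace E]
  {P : E →L[𝕜] E}

namespace IsStarProjection

theorem apply_eq_self (hP : IsStarProjection P) {x : E}
    (hx : x ∈ LinearMap.range (P : E →ₗ[𝕜] E)) : P x = x :=
  LinearMap.IsIdempotentElem.mem_range_iff
    (ContinuousLinearMap.IsIdempotentElem.toLinearMap hP.isIdempotentElem) |>.1 hx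

theorem inner_apply_left (hP : IsStarProjection P) (x y : E) : ⟪P x, y⟫_𝕜 = ⟪x, P y⟫_𝕜 :=
  hP.isSelfAdjoint.isSymmetric x y

theorem inner_apply_self (hP : IsStarProjection P) (x : E) : ⟪P x, x⟫_𝕜 = ⟪P x, P x⟫_𝕜 := by
  rw [← hP.inner_apply_left, ← mul_apply_eq_comp, hP.isIdempotentElem]

theorem isClosed_range (hP : IsStarProjection P) :
    IsClosed (LinearMap.range (P : E →ₗ[𝕜] E) : Set E) :=
  ContinuousLinearMap.IsIdempotentElem.isClosed_range hP.isIdempotentElem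

theorem range_le_topologicalClosure_map (hP : IsStarProjection P) {K : Submodule 𝕜 E}
    (h : Kᗮ ⊓ LinearMap.range (P : E →ₗ[𝕜] E) = ⊥) :
    LinearMap.range (P : E →ₗ[𝕜] E) ≤ (K.map (P : E →ₗ[𝕜] E)).topologicalClosure := by
  refine Submodule.le_topologicalClosure_of_orthogonal_inf_eq_bot hP.isClosed_range
    LinearMap.map_le_range (eq_bot_iff.2 fun x ⟨hxK, hxP⟩ => ?_)
  refine h ▸ ⟨(Submodule.mem_orthogonal _ _).2 fun k hk => ?_, hxP⟩
  rw [← hP.apply_eq_self hxP, ← hP.inner_apply_left]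
  exact hxK _ ⟨k, hk, rfl⟩

end IsStarProjection

end StarProjection

section SquareRoot

variable {𝕜 E : Type*} [RCLike 𝕜] [NormedAddCommGroup E] [InnerProductSpace 𝕜 E]
  {P Q : E →L[𝕜] E} {B : Set (E × E)}

local notation "𝔭" => LinearMap.range (P : E →ₗ[𝕜] E)
local notation "𝔮" => LinearMap.range (Q : E →ₗ[𝕜] E)

namespace IsSelfAdjGraph

theorem apply_prodMk_mem (hB : IsSelfAdjGraph 𝔭 B)
    (hsq : ∀ p ∈ 𝔭, (P (Q p), p) ∈ GraphComp B B) {a b : E} (hab : (a, b) ∈ B) :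
    (P (Q b), a) ∈ B := by
  -- `B` is injective and `B (B (P Q b)) = b = B a`
  obtain ⟨w, hw, hwb⟩ := hsq b (hB.snd_mem hab)
  rwa [hB.fst_eq_fst (fun s hs => (hsq s hs).imp fun _ h => h.2) hab hwb]

variable [CompleteSpace E]

theorem norm_eq_norm_apply_of_mem (hB : IsSelfAdjGraph 𝔭 B) (hP : IsStarProjection P)
    (hQ : IsStarProjection Q) (hsq : ∀ p ∈ 𝔭, (P (Q p), p) ∈ GraphComp B B) {a b : E}
    (hab : (a, b) ∈ B) : ‖a‖ = ‖Q b‖ := by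
  have h : ⟪a, a⟫_𝕜 = ⟪Q b, Q b⟫_𝕜 := by
    rw [hB.inner_eq hab (hB.apply_prodMk_mem hsq hab), hP.inner_apply_left,
      hP.apply_eq_self (hB.snd_mem hab), hQ.inner_apply_self]
  rw [norm_eq_sqrt_re_inner (𝕜 := 𝕜) a, h, ← norm_eq_sqrt_re_inner]

theorem eq_zero_of_zero_prodMk_mem (hB : IsSelfAdjGraph 𝔭 B) (hP : IsStarProjection P)
    (hQ : IsStarProjection Q) (hsq : ∀ p ∈ 𝔭, (P (Q p), p) ∈ GraphComp B B)
    (h : 𝔭 ⊓ 𝔮ᗮ = ⊥) {v : E} (hv : (0, v) ∈ B) : v = 0 := by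
  have hQv : Q v = 0 := by
    simpa using (hB.norm_eq_norm_apply_of_mem hP hQ hsq hv).symm
  have hv' : v ∈ 𝔮ᗮ := hQ.isSelfAdjoint.isSymmetric.orthogonal_range ▸ hQv
  simpa [h] using Submodule.mem_inf.2 ⟨hB.snd_mem hv, hv'⟩

theorem snd_eq_snd (hB : IsSelfAdjGraph 𝔭 B) (hP : IsStarProjection P)
    (hQ : IsStarProjection Q) (hsq : ∀ p ∈ 𝔭, (P (Q p), p) ∈ GraphComp B B)
    (h : 𝔭 ⊓ 𝔮ᗮ = ⊥) {x y y' : E} (hy : (x, y) ∈ B) (hy' : (x, y') ∈ B) : y = y' :=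
  sub_eq_zero.1 <| hB.eq_zero_of_zero_prodMk_mem hP hQ hsq h <| by
    simpa using hB.toSubmodule.sub_mem hy hy'

theorem exists_prodMk_mem_norm_eq (hB : IsSelfAdjGraph 𝔭 B) (hP : IsStarProjection P)
    (hQ : IsStarProjection Q) (hsq : ∀ p ∈ 𝔭, (P (Q p), p) ∈ GraphComp B B)
    (h : 𝔭ᗮ ⊓ 𝔮 = ⊥) {q : E} (hq : q ∈ 𝔮) : ∃ y, (P q, y) ∈ B ∧ ‖y‖ = ‖q‖ := by
  -- the graph of `W` on `Q𝔭`: `W (Q b) = a` whenever `B a = b`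
  set Γ := hB.toSubmodule.map (((Q : E →ₗ[𝕜] E) ∘ₗ LinearMap.snd 𝕜 E E).prod (LinearMap.fst 𝕜 E E))
  set C := {z : E × E | (P z.1, z.2) ∈ B ∧ ‖z.2‖ = ‖z.1‖}
  have hΓC : (Γ : Set (E × E)) ⊆ C := by
    rintro _ ⟨⟨a, b⟩, hab, rfl⟩
    exact ⟨hB.apply_prodMk_mem hsq hab, hB.norm_eq_norm_apply_of_mem hP hQ hsq hab⟩
  have hC : IsClosed C :=
    ((hB.isClosed hP.isClosed_range).preimage (by fun_prop)).inter
      (isClosed_eq (by fun_prop) (by fun_prop))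
  have hqΓ : q ∈ closure (Prod.fst '' (Γ : Set (E × E))) := by
    refine closure_mono ?_ (hQ.range_le_topologicalClosure_map h hq)
    rintro _ ⟨p, hp, rfl⟩
    obtain ⟨w, -, hwp⟩ := hsq p hp
    exact ⟨(Q p, w), ⟨(w, p), hwp, rfl⟩, rfl⟩
  obtain ⟨y, hy⟩ :=
    Submodule.exists_prodMk_mem_closure_of_norm_le (fun z hz => (hΓC hz).2.le) hqΓ
  exact ⟨y, closure_minimal hΓC hC hy⟩

theorem norm_eq_of_prodMk_mem (hB : IsSelfAdjGraph 𝔭 B) (hP : IsStarProjection P)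
    (hQ : IsStarProjection Q) (hsq : ∀ p ∈ 𝔭, (P (Q p), p) ∈ GraphComp B B)
    (h₂ : 𝔭 ⊓ 𝔮ᗮ = ⊥) (h₃ : 𝔭ᗮ ⊓ 𝔮 = ⊥) {q y : E} (hq : q ∈ 𝔮) (hy : (P q, y) ∈ B) :
    ‖y‖ = ‖q‖ := by
  obtain ⟨y₀, hy₀, hnorm⟩ := hB.exists_prodMk_mem_norm_eq hP hQ hsq h₃ hq
  rwa [hB.snd_eq_snd hP hQ hsq h₂ hy hy₀]

theorem exists_mem_range_prodMk_mem (hB : IsSelfAdjGraph 𝔭 B) (hP : IsStarProjection P)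
    (hQ : IsStarProjection Q) (hsq : ∀ p ∈ 𝔭, (P (Q p), p) ∈ GraphComp B B)
    (h : 𝔭 ⊓ 𝔮ᗮ = ⊥) {p : E} (hp : p ∈ 𝔭) : ∃ q ∈ 𝔮, (P q, p) ∈ B := by
  set D := hB.toSubmodule.map (LinearMap.fst 𝕜 E E)
  -- the graph of `W⁻¹` on the domain `D` of `B`
  set Γ := hB.toSubmodule.map ((LinearMap.fst 𝕜 E E).prod ((Q : E →ₗ[𝕜] E) ∘ₗ LinearMap.snd 𝕜 E E))
  set C := {z : E × E | z.2 ∈ 𝔮 ∧ (P z.2, z.1) ∈ B}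
  have hΓC : (Γ : Set (E × E)) ⊆ C := by
    rintro _ ⟨⟨a, b⟩, hab, rfl⟩
    exact ⟨LinearMap.mem_range_self _ b, hB.apply_prodMk_mem hsq hab⟩
  have hC : IsClosed C :=
    (hQ.isClosed_range.preimage continuous_snd).inter
      ((hB.isClosed hP.isClosed_range).preimage (by fun_prop))
  have hD : Dᗮ ⊓ 𝔭 = ⊥ := eq_bot_iff.2 fun x ⟨hxD, hx⟩ =>
    (Submodule.mem_bot 𝕜).2 <| hB.eq_zero_of_zero_prodMk_mem hP hQ hsq h <|
      hB.zero_prodMk_mem hx fun w hw => hxD w.1 ⟨w, hw, rfl⟩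
  have hpΓ : p ∈ closure (Prod.fst '' (Γ : Set (E × E))) := by
    refine closure_mono ?_ (Submodule.le_topologicalClosure_of_orthogonal_inf_eq_bot
      hP.isClosed_range (Submodule.map_le_iff_le_comap.2 fun _ => hB.fst_mem) hD hp)
    rintro _ ⟨⟨a, b⟩, hab, rfl⟩
    exact ⟨(a, Q b), ⟨(a, b), hab, rfl⟩, rfl⟩
  have hΓ : ∀ z ∈ Γ, ‖z.2‖ ≤ ‖z.1‖ := by
    rintro _ ⟨⟨a, b⟩, hab, rfl⟩
    exact (hB.norm_eq_norm_apply_of_mem hP hQ hsq hab).ge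
  obtain ⟨q, hq⟩ := Submodule.exists_prodMk_mem_closure_of_norm_le hΓ hpΓ
  exact ⟨q, closure_minimal hΓC hC hq⟩

end IsSelfAdjGraph

end SquareRoot

theorem W_isometry_general
    {E : Type*} [NormedAddCommGroup E] [InnerProductSpace ℂ E] [CompleteSpace E]
    (P : E →L[ℂ] E) (hP_proj : P ∘L P = P) (hP_sa : IsSelfAdjoint P)
    (Q : E →L[ℂ] E) (hQ_proj : Q ∘L Q = Q) (hQ_sa : IsSelfAdjoint Q)
    (hgen2 : LinearMap.range (P : E →ₗ[ℂ] E) ⊓ (LinearMap.range (Q : E →ₗ[ℂ] E))ᗮ = ⊥)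
    (hgen3 : (LinearMap.range (P : E →ₗ[ℂ] E))ᗮ ⊓ LinearMap.range (Q : E →ₗ[ℂ] E) = ⊥)
    (graΔ graB : Set (E × E))
    (hΔ : graΔ = {z : E × E | ∃ p ∈ LinearMap.range (P : E →ₗ[ℂ] E), z = (P (Q p), P ((1 - Q) p))})
    -- `graB` is the graph of `(1 + Δ_𝔭)^{1/2}`
    (hB_pos : IsPosSelfAdjGraph (LinearMap.range (P : E →ₗ[ℂ] E)) graB)
    (hB_sq : GraphComp graB graB = {z : E × E | ∃ w ∈ graΔ, z = (w.1, w.1 + w.2)}) :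
    -- `W` is everywhere defined on 𝔮 …
    (∀ q ∈ LinearMap.range (Q : E →ₗ[ℂ] E), ∃ y : E, (P q, y) ∈ graB) ∧
    -- … isometric …
    (∀ q ∈ LinearMap.range (Q : E →ₗ[ℂ] E), ∀ y : E, (P q, y) ∈ graB → ‖y‖ = ‖q‖) ∧
    -- … and onto 𝔭
    (∀ p ∈ LinearMap.range (P : E →ₗ[ℂ] E), ∃ q ∈ LinearMap.range (Q : E →ₗ[ℂ] E), (P q, p) ∈ graB) := by
  have hP : IsStarProjection P := ⟨hP_proj, hP_sa⟩
  have hQ : IsStarProjection Q := ⟨hQ_proj, hQ_sa⟩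
  have hB := hB_pos.isSelfAdjGraph
  have hsq : ∀ p ∈ LinearMap.range (P : E →ₗ[ℂ] E), (P (Q p), p) ∈ GraphComp graB graB := by
    intro p hp
    rw [hB_sq, hΔ]
    refine ⟨_, ⟨p, hp, rfl⟩, ?_⟩
    simp [hP.apply_eq_self hp]
  exact ⟨fun q hq => (hB.exists_prodMk_mem_norm_eq hP hQ hsq hgen3 hq).imp fun _ h => h.1,
    fun q hq _ hy => hB.norm_eq_of_prodMk_mem hP hQ hsq hgen2 hgen3 hq hy,
    fun p hp => hB.exists_mem_range_prodMk_mem hP hQ hsq hgen2 hp⟩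

/-- Lemma 4.17: the map `W : 𝔮 → 𝔭`, `Wq = (1 + Δ_𝔭)^{1/2} P q`, is a surjective isometry
from `𝔮` onto `𝔭`. Here `Δ_𝔭` has graph `{(PQp, PQ⊥p) : p ∈ 𝔭}` and `(1 + Δ_𝔭)^{1/2}` is
its positive self-adjoint square root, given by the graph `graB`. -/
theorem W_isometry
    {E : Type*} [NormedAddCommGroup E] [InnerProductSpace ℂ E] [CompleteSpace E]
    (P : E →L[ℂ] E) (hP_proj : P ∘L P = P) (hP_sa : IsSelfAdjoint P)
    (Q : E →L[ℂ] E) (hQ_proj : Q ∘L Q = Q) (hQ_sa : IsSelfAdjoint Q)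
    (hgen1 : LinearMap.range (P : E →ₗ[ℂ] E) ⊓ LinearMap.range (Q : E →ₗ[ℂ] E) = ⊥)
    (hgen2 : LinearMap.range (P : E →ₗ[ℂ] E) ⊓ (LinearMap.range (Q : E →ₗ[ℂ] E))ᗮ = ⊥)
    (hgen3 : (LinearMap.range (P : E →ₗ[ℂ] E))ᗮ ⊓ LinearMap.range (Q : E →ₗ[ℂ] E) = ⊥)
    (hgen4 : (LinearMap.range (P : E →ₗ[ℂ] E))ᗮ ⊓ (LinearMap.range (Q : E →ₗ[ℂ] E))ᗮ = ⊥)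
    (graΔ graB : Set (E × E))
    (hΔ : graΔ = {z : E × E | ∃ p ∈ LinearMap.range (P : E →ₗ[ℂ] E), z = (P (Q p), P ((1 - Q) p))})
    -- `graB` is the graph of `(1 + Δ_𝔭)^{1/2}`
    (hB_pos : IsPosSelfAdjGraph (LinearMap.range (P : E →ₗ[ℂ] E)) graB)
    (hB_sq : GraphComp graB graB = {z : E × E | ∃ w ∈ graΔ, z = (w.1, w.1 + w.2)}) :
    -- `W` is everywhere defined on 𝔮 …
    (∀ q ∈ LinearMap.range (Q : E →ₗ[ℂ] E), ∃ y : E, (P q, y) ∈ graB) ∧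
    -- … isometric …
    (∀ q ∈ LinearMap.range (Q : E →ₗ[ℂ] E), ∀ y : E, (P q, y) ∈ graB → ‖y‖ = ‖q‖) ∧
    -- … and onto 𝔭
    (∀ p ∈ LinearMap.range (P : E →ₗ[ℂ] E), ∃ q ∈ LinearMap.range (Q : E →ₗ[ℂ] E), (P q, p) ∈ graB) :=
  W_isometry_general P hP_proj hP_sa Q hQ_proj hQ_sa hgen2 hgen3 graΔ graB hΔ hB_pos hB_sq
end

section
/- Let Γ be an anti-unitary involution on a complex Hilbert space 𝔥, P a basis projection with range 𝔭, 𝔮 a closed Γ-invariant subspace, and M := P(Re 𝔮) where Re 𝔮 = {q ∈ 𝔮 : Γq = q}. Then P(Re 𝔮^⊥) is dense in iM' := {p ∈ 𝔭 : ⟨q + Γq, p⟩ + ⟨p, q + Γq⟩ = 0 for all q ∈ 𝔮}, and in particular P(Re 𝔮^⊥) ⊆ iM'. -/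
open scoped ComplexInnerProductSpace

/-!
The map `p ↦ p + Γ p` sends `𝔭` bijectively onto the `Γ`-fixed vectors, with inverse `P`. Under it
the condition defining `iM'` becomes `p + Γ p ⊥ q + Γ q` for all `q ∈ 𝔮`, and since `𝔮` is a complex
subspace (test with `q` and `i q`) this already forces `p + Γ p ∈ 𝔮ᗮ`. Hence `P(Re 𝔮ᗮ)` is all of
`iM'`, and in particular dense in it.
-/

section Conjugation

variable {E : Type*} [NormedAddCommGroup E] [InnerProductSpace ℂ E] {Γ : E →ₗ⋆[ℂ] E}

theorem map_self_add_map (hΓΓ : Function.Involutive Γ) (x : E) : Γ (x + Γ x) = x + Γ x := by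
  rw [map_add, hΓΓ x, add_comm]

theorem inner_add_map_right_of_map_eq (hΓ : ∀ x y, ⟪Γ x, Γ y⟫ = ⟪y, x⟫) {r : E} (hr : Γ r = r)
    (p : E) : ⟪r, p + Γ p⟫ = ⟪r, p⟫ + ⟪p, r⟫ := by
  rw [inner_add_right, ← hΓ r p, hr]

theorem mem_orthogonal_of_inner_add_map_eq_zero (Γ : E →ₗ⋆[ℂ] E) (K : Submodule ℂ E) {x : E}
    (hx : ∀ q ∈ K, ⟪q + Γ q, x⟫ = 0) : x ∈ Kᗮ := by
  intro q hq
  have hplus := hx q hq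
  have hminus : ⟪q - Γ q, x⟫ = 0 := by
    have h := hx (Complex.I • q) (K.smul_mem _ hq)
    rwa [map_smulₛₗ, Complex.conj_I, neg_smul, ← sub_eq_add_neg, ← smul_sub, inner_smul_left,
      mul_eq_zero, or_iff_right (by simp)] at h
  have htwice : ⟪(2 : ℂ) • q, x⟫ = 0 := by
    rw [show (2 : ℂ) • q = (q + Γ q) + (q - Γ q) by rw [two_smul]; abel, inner_add_left, hplus,
      hminus, add_zero]
  simpa using htwice

theorem apply_map_eq_zero_of_mem_range {P : E →L[ℂ] E} (hP : IsIdempotentElem P)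
    (hΓΓ : Function.Involutive Γ) (hPΓ : ∀ x, P x + Γ (P (Γ x)) = x) {p : E}
    (hp : p ∈ LinearMap.range (P : E →ₗ[ℂ] E)) : P (Γ p) = 0 := by
  obtain ⟨y, rfl⟩ := hp
  have hPP : P (P y) = P y := congr($hP y)
  have h := hPΓ (P y)
  rw [hPP, add_eq_left] at h
  simpa [hΓΓ _] using congr(Γ $h)

theorem apply_add_map_of_mem_range {P : E →L[ℂ] E} (hP : IsIdempotentElem P)
    (hΓΓ : Function.Involutive Γ) (hPΓ : ∀ x, P x + Γ (P (Γ x)) = x) {p : E}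
    (hp : p ∈ LinearMap.range (P : E →ₗ[ℂ] E)) : P (p + Γ p) = p := by
  obtain ⟨y, rfl⟩ := hp
  rw [map_add, apply_map_eq_zero_of_mem_range hP hΓΓ hPΓ ⟨y, rfl⟩, add_zero]
  exact congr($hP y)

theorem image_fixed_orthogonal_eq {P : E →L[ℂ] E} (hP : IsIdempotentElem P)
    (hΓ : ∀ x y, ⟪Γ x, Γ y⟫ = ⟪y, x⟫) (hΓΓ : Function.Involutive Γ)
    (hPΓ : ∀ x, P x + Γ (P (Γ x)) = x) {K : Submodule ℂ E} (hK : ∀ q ∈ K, Γ q ∈ K) :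
    P '' {x : E | x ∈ Kᗮ ∧ Γ x = x} =
      {p : E | p ∈ LinearMap.range (P : E →ₗ[ℂ] E) ∧ ∀ q ∈ K, ⟪q + Γ q, p⟫ + ⟪p, q + Γ q⟫ = 0} := by
  ext p
  constructor
  · rintro ⟨x, ⟨hxK, hx⟩, rfl⟩
    refine ⟨⟨x, rfl⟩, fun q hq => ?_⟩
    have hPx : P x + Γ (P x) = x := by simpa only [hx] using hPΓ x
    rw [← inner_add_map_right_of_map_eq hΓ (map_self_add_map hΓΓ q), hPx]
    exact K.inner_right_of_mem_orthogonal (K.add_mem hq (hK q hq)) hxK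
  · rintro ⟨hp, hpK⟩
    refine ⟨p + Γ p, ⟨?_, map_self_add_map hΓΓ p⟩, apply_add_map_of_mem_range hP hΓΓ hPΓ hp⟩
    refine mem_orthogonal_of_inner_add_map_eq_zero Γ K fun q hq => ?_
    rw [inner_add_map_right_of_map_eq hΓ (map_self_add_map hΓΓ q)]
    exact hpK q hq

end Conjugation

theorem real_subspace_duality_dense_general
    {E : Type*} [NormedAddCommGroup E] [InnerProductSpace ℂ E]
    (Γ : E → E)
    (hΓ_add : ∀ x y, Γ (x + y) = Γ x + Γ y)
    (hΓ_smul : ∀ (c : ℂ) (x : E), Γ (c • x) = (starRingEnd ℂ) c • Γ x)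
    (hΓ_inner : ∀ f h : E, ⟪Γ f, Γ h⟫ = ⟪h, f⟫)
    (hΓ_inv : ∀ x, Γ (Γ x) = x)
    (P : E →L[ℂ] E) (hP_proj : P ∘L P = P)
    (hP_basis : ∀ x, P x + Γ (P (Γ x)) = x)
    (𝔮 : Submodule ℂ E)
    (h𝔮Γ : ∀ q ∈ 𝔮, Γ q ∈ 𝔮) :
    P '' {x : E | x ∈ 𝔮ᗮ ∧ Γ x = x}
      ⊆ {p : E | p ∈ LinearMap.range (P : E →ₗ[ℂ] E) ∧ ∀ q ∈ 𝔮, ⟪q + Γ q, p⟫ + ⟪p, q + Γ q⟫ = 0} ∧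
    ∀ p₀ ∈ {p : E | p ∈ LinearMap.range (P : E →ₗ[ℂ] E) ∧ ∀ q ∈ 𝔮, ⟪q + Γ q, p⟫ + ⟪p, q + Γ q⟫ = 0},
      p₀ ∈ closure (P '' {x : E | x ∈ 𝔮ᗮ ∧ Γ x = x}) := by
  let Γₗ : E →ₗ⋆[ℂ] E := { toFun := Γ, map_add' := hΓ_add, map_smul' := hΓ_smul }
  have hP := image_fixed_orthogonal_eq (Γ := Γₗ) hP_proj hΓ_inner hΓ_inv hP_basis h𝔮Γ
  exact ⟨hP.subset, fun p hp => subset_closure (hP.superset hp)⟩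

/-- Lemma 6.1: with `M = P(Re 𝔮)`, the set `P(Re 𝔮ᗮ)` is contained and dense in
`iM' = {p ∈ 𝔭 : ⟪q + Γq, p⟫ + ⟪p, q + Γq⟫ = 0 for all q ∈ 𝔮}`. -/
theorem real_subspace_duality_dense
    {E : Type*} [NormedAddCommGroup E] [InnerProductSpace ℂ E] [CompleteSpace E]
    (Γ : E → E)
    (hΓ_add : ∀ x y, Γ (x + y) = Γ x + Γ y)
    (hΓ_smul : ∀ (c : ℂ) (x : E), Γ (c • x) = (starRingEnd ℂ) c • Γ x)
    (hΓ_inner : ∀ f h : E, ⟪Γ f, Γ h⟫ = ⟪h, f⟫)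
    (hΓ_inv : ∀ x, Γ (Γ x) = x)
    (P : E →L[ℂ] E) (hP_proj : P ∘L P = P) (hP_sa : IsSelfAdjoint P)
    (hP_basis : ∀ x, P x + Γ (P (Γ x)) = x)
    (𝔮 : Submodule ℂ E) (h𝔮_closed : IsClosed (𝔮 : Set E))
    (h𝔮Γ : ∀ q ∈ 𝔮, Γ q ∈ 𝔮)
    (hgen1 : LinearMap.range (P : E →ₗ[ℂ] E) ⊓ 𝔮 = ⊥)
    (hgen2 : LinearMap.range (P : E →ₗ[ℂ] E) ⊓ 𝔮ᗮ = ⊥) :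
    P '' {x : E | x ∈ 𝔮ᗮ ∧ Γ x = x}
      ⊆ {p : E | p ∈ LinearMap.range (P : E →ₗ[ℂ] E) ∧ ∀ q ∈ 𝔮, ⟪q + Γ q, p⟫ + ⟪p, q + Γ q⟫ = 0} ∧
    ∀ p₀ ∈ {p : E | p ∈ LinearMap.range (P : E →ₗ[ℂ] E) ∧ ∀ q ∈ 𝔮, ⟪q + Γ q, p⟫ + ⟪p, q + Γ q⟫ = 0},
      p₀ ∈ closure (P '' {x : E | x ∈ 𝔮ᗮ ∧ Γ x = x}) :=
  real_subspace_duality_dense_general Γ hΓ_add hΓ_smul hΓ_inner hΓ_inv P hP_proj hP_basis 𝔮 h𝔮Γ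
end

section
/- Let 𝔥 be a complex Hilbert space with anti-unitary involution Γ, P a basis projection with range 𝔭, and 𝔮 a closed Γ-invariant subspace with orthogonal projection Q such that 𝔭 and 𝔮 are in generic position. In the fermionic Fock representation over P, the vacuum vector Ω is cyclic for the von Neumann algebra M(𝔮) generated by {a(q) : q ∈ 𝔮} if and only if P𝔮 is dense in 𝔭, and Ω is separating for M(𝔮) if and only if P(𝔮^⊥) is dense in 𝔭. -/
open scoped ComplexInnerProductSpace

/-!
Write `W(X)` for the span of the vectors `a(t₁) ⋯ a(tₙ) Ω` with all `tᵢ ∈ X`. Splitting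
`a(f) = a(Pf) + a(PΓf)*`, the first term kills `Ω` and anticommutes through such products up to
contractions, while `a(PΓf)*` is a limit of `a(Γr) - a(PΓr)`, `r ∈ 𝔯`, as soon as `P𝔯` is dense in
`𝔭`. So for `Γ`-invariant `𝔯` with `P𝔯` dense, the closure of `W(𝔯)` is invariant under the whole
CAR algebra, and cyclicity of `Ω` makes `W(𝔯)` dense.

Generic position makes `P𝔮` and `P𝔮ᗮ` dense in `𝔭`, so all four statements hold. `W(𝔮) ⊆ M(𝔮)Ω`
gives cyclicity. For separation, odd vacuum expectations vanish, so the reflection `Z` in the closed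
span of the even products anticommutes with every `a(f)`; then `Z a(r)`, `r ∈ 𝔮ᗮ`, lies in `M(𝔮)'`
and maps `W(𝔮ᗮ)` into itself up to sign, and `m Ω = 0` forces `m` to vanish on the dense `W(𝔮ᗮ)`.
-/

theorem closure_image_eq_range_of_range_inf_orthogonal_eq_bot
    {E : Type*} [NormedAddCommGroup E] [InnerProductSpace ℂ E] [CompleteSpace E] {P : E →L[ℂ] E}
    (hP_proj : IsIdempotentElem P) (hP_sa : IsSelfAdjoint P) {𝔯 : Submodule ℂ E}
    (h : LinearMap.range (P : E →ₗ[ℂ] E) ⊓ 𝔯ᗮ = ⊥) :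
    closure (P '' 𝔯) = (LinearMap.range (P : E →ₗ[ℂ] E) : Set E) := by
  set V := (𝔯.map (P : E →ₗ[ℂ] E)).topologicalClosure
  have hV : V ≤ LinearMap.range (P : E →ₗ[ℂ] E) :=
    Submodule.topologicalClosure_minimal _ LinearMap.map_le_range
      (ContinuousLinearMap.IsIdempotentElem.isClosed_range hP_proj)
  have hV_orth : Vᗮ ⊓ LinearMap.range (P : E →ₗ[ℂ] E) = ⊥ := by
    refine eq_bot_iff.mpr fun x ⟨hxV, hxP⟩ => h ▸ ⟨hxP, fun r hr => ?_⟩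
    obtain ⟨y, rfl⟩ := hxP
    rw [Submodule.orthogonal_closure] at hxV
    calc ⟪r, P y⟫ = ⟪r, P (P y)⟫ := by rw [← mul_apply_eq_comp, hP_proj]
      _ = ⟪P r, P y⟫ := (hP_sa.isSymmetric r (P y)).symm
      _ = 0 := hxV (P r) ⟨r, hr, rfl⟩
  have hV_eq := Submodule.sup_orthogonal_inf_of_hasOrthogonalProjection hV
  rw [hV_orth, sup_bot_eq] at hV_eq
  rw [← hV_eq, Submodule.topologicalClosure_coe, Submodule.map_coe]
  rfl

structure CARFockRep (E F : Type*) [NormedAddCommGroup E] [InnerProductSpace ℂ E]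
    [NormedAddCommGroup F] [InnerProductSpace ℂ F] [CompleteSpace F] where
  Γ : E → E
  P : E →L[ℂ] E
  a : E → (F →L[ℂ] F)
  Ω : F
  Γ_add : ∀ x y, Γ (x + y) = Γ x + Γ y
  inner_Γ_Γ : ∀ f h : E, ⟪Γ f, Γ h⟫ = ⟪h, f⟫
  Γ_Γ : ∀ x, Γ (Γ x) = x
  P_comp_P : P ∘L P = P
  P_add_Γ_P_Γ : ∀ x, P x + Γ (P (Γ x)) = x
  a_add : ∀ f g, a (f + g) = a f + a g
  adjoint_a : ∀ f, ContinuousLinearMap.adjoint (a f) = a (Γ f)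
  car : ∀ f h : E, a f ∘L ContinuousLinearMap.adjoint (a h)
    + ContinuousLinearMap.adjoint (a h) ∘L a f = (⟪f, h⟫ : ℂ) • (1 : F →L[ℂ] F)
  a_vacuum : ∀ f : E, P f = f → a f Ω = 0
  vacuum_cyclic : ∀ K : Submodule ℂ F, IsClosed (K : Set F) → Ω ∈ K →
    (∀ f : E, ∀ x ∈ K, a f x ∈ K) → K = ⊤

namespace CARFockRep

variable {E F : Type*} [NormedAddCommGroup E] [InnerProductSpace ℂ E]
  [NormedAddCommGroup F] [InnerProductSpace ℂ F] [CompleteSpace F] (R : CARFockRep E F)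

lemma P_P (x : E) : R.P (R.P x) = R.P x :=
  DFunLike.congr_fun R.P_comp_P x

lemma Γ_P (x : E) : R.Γ (R.P x) = R.Γ x - R.P (R.Γ x) := by
  have h := R.P_add_Γ_P_Γ (R.Γ x)
  rw [R.Γ_Γ] at h
  exact eq_sub_of_add_eq' h

lemma norm_Γ (x : E) : ‖R.Γ x‖ = ‖x‖ := by
  have h := R.inner_Γ_Γ x x
  rw [inner_self_eq_norm_sq_to_K, inner_self_eq_norm_sq_to_K] at h
  exact (pow_left_inj₀ (norm_nonneg _) (norm_nonneg _) two_ne_zero).mp (by exact_mod_cast h)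

lemma Γ_mem_orthogonal {𝔮 : Submodule ℂ E} (h𝔮 : ∀ q ∈ 𝔮, R.Γ q ∈ 𝔮) {r : E} (hr : r ∈ 𝔮ᗮ) :
    R.Γ r ∈ 𝔮ᗮ := fun q hq => by
  rw [← R.Γ_Γ q, R.inner_Γ_Γ]
  exact Submodule.inner_left_of_mem_orthogonal (h𝔮 q hq) hr

lemma a_sub (f g : E) : R.a (f - g) = R.a f - R.a g :=
  eq_sub_of_add_eq (by rw [← R.a_add, sub_add_cancel])

lemma a_eq_add (f : E) : R.a f = R.a (R.P f) + R.a (R.Γ (R.P (R.Γ f))) := by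
  rw [← R.a_add, R.P_add_Γ_P_Γ]

lemma inner_a_left (f : E) (x y : F) : ⟪R.a f x, y⟫ = ⟪x, R.a (R.Γ f) y⟫ := by
  rw [← R.adjoint_a, ContinuousLinearMap.adjoint_inner_right]

lemma a_a (f g : E) (x : F) : R.a f (R.a g x) = ⟪f, R.Γ g⟫ • x - R.a g (R.a f x) := by
  have h := DFunLike.congr_fun (R.car f (R.Γ g)) x
  simp only [R.adjoint_a, R.Γ_Γ, add_apply, ContinuousLinearMap.comp_apply, smul_apply,
    one_apply_eq_self] at h
  exact eq_sub_of_add_eq h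

lemma norm_a_apply_le (f : E) (x : F) : ‖R.a f x‖ ≤ ‖f‖ * ‖x‖ := by
  have h := congrArg (⟪x, ·⟫) (DFunLike.congr_fun (R.car f f) x)
  simp only [R.adjoint_a, add_apply, ContinuousLinearMap.comp_apply, smul_apply,
    one_apply_eq_self, inner_add_right, inner_smul_right] at h
  have h₁ : ⟪x, R.a f (R.a (R.Γ f) x)⟫ = ⟪R.a (R.Γ f) x, R.a (R.Γ f) x⟫ := by
    rw [R.inner_a_left, R.Γ_Γ]
  have h₂ : ⟪x, R.a (R.Γ f) (R.a f x)⟫ = ⟪R.a f x, R.a f x⟫ := (R.inner_a_left f x _).symm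
  rw [h₁, h₂] at h
  simp only [inner_self_eq_norm_sq_to_K] at h
  have h' : ‖R.a (R.Γ f) x‖ ^ 2 + ‖R.a f x‖ ^ 2 = (‖f‖ * ‖x‖) ^ 2 := by
    rw [mul_pow]; exact_mod_cast h
  nlinarith [norm_nonneg (R.a f x), mul_nonneg (norm_nonneg f) (norm_nonneg x)]

lemma continuous_a_Γ_apply (x : F) : Continuous fun g => R.a (R.Γ g) x := by
  let φ : E →+ F := AddMonoidHom.mk' (fun g => R.a (R.Γ g) x) fun g h => by
    simp only [R.Γ_add, R.a_add, add_apply]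
  refine AddMonoidHomClass.continuous_of_bound φ ‖x‖ fun g => ?_
  simpa only [φ, AddMonoidHom.mk'_apply, R.norm_Γ, mul_comm] using R.norm_a_apply_le (R.Γ g) x

def vec (ts : List E) : F := ts.foldr (fun t x => R.a t x) R.Ω

@[simp] lemma vec_nil : R.vec [] = R.Ω := rfl

@[simp] lemma vec_cons (t : E) (ts : List E) : R.vec (t :: ts) = R.a t (R.vec ts) := rfl

def vecSpan (L : Set (List E)) : Submodule ℂ F := Submodule.span ℂ (R.vec '' L)

variable {R}

lemma vec_mem_vecSpan {L : Set (List E)} {ts : List E} (h : ts ∈ L) : R.vec ts ∈ R.vecSpan L :=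
  Submodule.subset_span ⟨ts, h, rfl⟩

lemma vecSpan_mono {L L' : Set (List E)} (h : L ⊆ L') : R.vecSpan L ≤ R.vecSpan L' :=
  Submodule.span_mono (Set.image_mono h)

lemma vecSpan_le_comap_a {L L' : Set (List E)} {t : E} (h : ∀ us ∈ L, t :: us ∈ L') :
    R.vecSpan L ≤ (R.vecSpan L').comap (R.a t : F →ₗ[ℂ] F) :=
  Submodule.span_le.mpr <| by
    rintro _ ⟨us, hus, rfl⟩
    exact R.vec_mem_vecSpan (h us hus)

lemma vecSpan_le_comap_a_of_mem {X : Set E} {t : E} (ht : t ∈ X) :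
    R.vecSpan {ts | ∀ u ∈ ts, u ∈ X} ≤
      (R.vecSpan {ts | ∀ u ∈ ts, u ∈ X}).comap (R.a t : F →ₗ[ℂ] F) :=
  vecSpan_le_comap_a fun _ hus => List.forall_mem_cons.mpr ⟨ht, hus⟩

lemma a_vec_mem_vecSpan_of_P_eq {p : E} (hp : R.P p = p) (ts : List E) :
    R.a p (R.vec ts) ∈ R.vecSpan {us | us.Sublist ts ∧ us.length + 1 = ts.length} := by
  induction ts with
  | nil => simp [R.a_vacuum p hp]
  | cons t ts ih =>
    rw [vec_cons, R.a_a]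
    refine Submodule.sub_mem _
      (Submodule.smul_mem _ _ (vec_mem_vecSpan ⟨List.sublist_cons_self t ts, rfl⟩))
      (vecSpan_le_comap_a ?_ ih)
    rintro us ⟨hsub, hlen⟩
    exact ⟨hsub.cons_cons t, by simp [hlen]⟩

lemma inner_vacuum_vec_of_odd {ts : List E} (hts : Odd ts.length) : ⟪R.Ω, R.vec ts⟫ = 0 := by
  induction hn : ts.length using Nat.strong_induction_on generalizing ts with
  | _ n ih =>
  obtain _ | ⟨t, ts⟩ := ts
  · simp at hts
  have hspan : R.vecSpan {us | us.Sublist ts ∧ us.length + 1 = ts.length} ≤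
      LinearMap.ker (innerₛₗ ℂ R.Ω) := Submodule.span_le.mpr <| by
    rintro _ ⟨us, ⟨-, hus⟩, rfl⟩
    simp only [List.length_cons] at hts hn
    exact ih us.length (by omega) (by rw [Nat.odd_iff] at hts ⊢; omega) rfl
  have hP_t := hspan (R.a_vec_mem_vecSpan_of_P_eq (R.P_P t) ts)
  rw [LinearMap.mem_ker, innerₛₗ_apply_apply] at hP_t
  rw [vec_cons, R.a_eq_add, add_apply, inner_add_right, hP_t, zero_add, ← R.inner_a_left,
    R.a_vacuum _ (R.P_P _), inner_zero_left]

lemma inner_vec_vec (fs gs : List E) :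
    ⟪R.vec fs, R.vec gs⟫ = ⟪R.Ω, R.vec ((fs.map R.Γ).reverse ++ gs)⟫ := by
  induction fs generalizing gs with
  | nil => rfl
  | cons f fs ih => rw [vec_cons, R.inner_a_left, ← vec_cons, ih]; simp

lemma inner_vec_vec_of_odd {fs gs : List E} (h : Odd (fs.length + gs.length)) :
    ⟪R.vec fs, R.vec gs⟫ = 0 := by
  rw [inner_vec_vec]
  exact inner_vacuum_vec_of_odd (by simpa using h)

lemma dense_of_vacuum_mem {K : Submodule ℂ F} (hΩ : R.Ω ∈ K)
    (hK : ∀ f, K ≤ K.topologicalClosure.comap (R.a f : F →ₗ[ℂ] F)) : Dense (K : Set F) := by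
  refine Submodule.dense_iff_topologicalClosure_eq_top.mpr <| R.vacuum_cyclic _
    K.isClosed_topologicalClosure (K.le_topologicalClosure hΩ) fun f x hx => ?_
  have hK' : K.topologicalClosure ≤ K.topologicalClosure.comap (R.a f : F →ₗ[ℂ] F) :=
    Submodule.topologicalClosure_minimal _ (hK f)
      (K.isClosed_topologicalClosure.preimage (R.a f).continuous)
  exact hK' hx

lemma dense_vecSpan {𝔯 : Submodule ℂ E} (h𝔯 : ∀ r ∈ 𝔯, R.Γ r ∈ 𝔯)
    (hP𝔯 : (LinearMap.range (R.P : E →ₗ[ℂ] E) : Set E) ⊆ closure (R.P '' 𝔯)) :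
    Dense (R.vecSpan {ts | ∀ t ∈ ts, t ∈ 𝔯} : Set F) := by
  set W := R.vecSpan {ts | ∀ t ∈ ts, t ∈ 𝔯}
  have hP_mem {p : E} (hp : R.P p = p) {ts : List E} (hts : ∀ t ∈ ts, t ∈ 𝔯) :
      R.a p (R.vec ts) ∈ W :=
    vecSpan_mono (L' := {ts | ∀ t ∈ ts, t ∈ 𝔯}) (fun _ hus t ht => hts t (hus.1.subset ht))
      (R.a_vec_mem_vecSpan_of_P_eq hp ts)
  refine dense_of_vacuum_mem (vec_mem_vecSpan (ts := []) (by simp)) fun f =>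
    Submodule.span_le.mpr ?_
  rintro _ ⟨ts, hts, rfl⟩
  -- `a (Γ g)` keeps `vec ts` in the closure of `W` for `g ∈ P 𝔯`, hence for `g ∈ closure (P 𝔯)`
  have hclosed : IsClosed {g | R.a (R.Γ g) (R.vec ts) ∈ W.topologicalClosure} :=
    W.isClosed_topologicalClosure.preimage (R.continuous_a_Γ_apply _)
  have hP𝔯_sub : R.P '' 𝔯 ⊆ {g | R.a (R.Γ g) (R.vec ts) ∈ W.topologicalClosure} := by
    rintro _ ⟨r, hr, rfl⟩
    refine W.le_topologicalClosure ?_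
    rw [R.Γ_P, R.a_sub, sub_apply]
    exact W.sub_mem (vecSpan_le_comap_a_of_mem (h𝔯 r hr) (vec_mem_vecSpan hts))
      (hP_mem (R.P_P _) hts)
  have hΓ := closure_minimal hP𝔯_sub hclosed (hP𝔯 ⟨R.Γ f, rfl⟩)
  rw [SetLike.mem_coe, Submodule.mem_comap, ContinuousLinearMap.coe_coe, R.a_eq_add f, add_apply]
  exact Submodule.add_mem _ (W.le_topologicalClosure (hP_mem (R.P_P f) hts)) hΓ

lemma dense_span_range_vec : Dense (Submodule.span ℂ (Set.range R.vec) : Set F) := by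
  rw [← Set.image_univ]
  exact dense_of_vacuum_mem (vec_mem_vecSpan (Set.mem_univ [])) fun _ =>
    (vecSpan_le_comap_a fun _ _ => Set.mem_univ _).trans
      (Submodule.comap_mono (Submodule.le_topologicalClosure _))

variable (R) in
def evenSpan : Submodule ℂ F := R.vecSpan {ts | Even ts.length}

variable (R) in
noncomputable def parity : F →L[ℂ] F := (R.evenSpan.topologicalClosure.reflection : F →L[ℂ] F)

lemma parity_vec (ts : List E) : R.parity (R.vec ts) = (-1 : ℂ) ^ ts.length • R.vec ts := by
  obtain h | h := Nat.even_or_odd ts.length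
  · rw [h.neg_one_pow, one_smul]
    exact Submodule.reflection_mem_subspace_eq_self
      (R.evenSpan.le_topologicalClosure (vec_mem_vecSpan h))
  · rw [h.neg_one_pow, neg_one_smul]
    refine Submodule.reflection_mem_subspace_orthogonalComplement_eq_neg ?_
    rw [Submodule.orthogonal_closure]
    refine Submodule.isOrtho_iff_le.mp (Submodule.isOrtho_span.mpr ?_)
      (Submodule.mem_span_singleton_self (R.vec ts))
    rintro _ rfl _ ⟨us, hus, rfl⟩
    exact inner_vec_vec_of_odd (h.add_even hus)

lemma parity_a (f : E) (x : F) : R.parity (R.a f x) = -R.a f (R.parity x) := by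
  have h : R.parity ∘L R.a f = -(R.a f ∘L R.parity) := by
    refine ContinuousLinearMap.ext_on (dense_span_range_vec (R := R)) ?_
    rintro _ ⟨ts, rfl⟩
    simp [← vec_cons, parity_vec, pow_succ]
  exact DFunLike.congr_fun h x

lemma parity_comp_a_mem_centralizer {X : Set E} {r : E} (hr : ∀ q ∈ X, ⟪r, R.Γ q⟫ = 0) :
    R.parity ∘L R.a r ∈ Set.centralizer {T | ∃ q ∈ X, T = R.a q} := by
  rintro _ ⟨q, hq, rfl⟩
  ext x
  simp [R.a_a r q, hr q hq, parity_a]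

theorem vacuum_separating {𝔮 : Submodule ℂ E} (h𝔮 : ∀ q ∈ 𝔮, R.Γ q ∈ 𝔮)
    (hdense : Dense (R.vecSpan {ts | ∀ t ∈ ts, t ∈ 𝔮ᗮ} : Set F)) {m : F →L[ℂ] F}
    (hm : m ∈ Set.centralizer (Set.centralizer {T | ∃ q ∈ 𝔮, T = R.a q})) (hmΩ : m R.Ω = 0) :
    m = 0 := by
  have hvec (rs : List E) (hrs : ∀ r ∈ rs, r ∈ 𝔮ᗮ) : m (R.vec rs) = 0 := by
    induction rs with
    | nil => exact hmΩ
    | cons r rs ih =>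
      rw [List.forall_mem_cons] at hrs
      have hr := R.parity_comp_a_mem_centralizer (X := 𝔮) fun q hq =>
        Submodule.inner_left_of_mem_orthogonal (h𝔮 q hq) hrs.1
      have hcomm := DFunLike.congr_fun (hm _ hr) (R.vec rs)
      simp only [mul_apply_eq_comp, ContinuousLinearMap.comp_apply, ih hrs.2, map_zero,
        ← vec_cons, parity_vec, map_smul] at hcomm
      exact (smul_eq_zero.mp hcomm.symm).resolve_left (pow_ne_zero _ (neg_ne_zero.mpr one_ne_zero))
  exact ContinuousLinearMap.ext_on hdense fun _ ⟨rs, hrs, hx⟩ => hx ▸ hvec rs hrs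

theorem dense_vacuum_orbit {X : Set E} (hdense : Dense (R.vecSpan {ts | ∀ t ∈ ts, t ∈ X} : Set F)) :
    Dense {x | ∃ m ∈ Set.centralizer (Set.centralizer {T | ∃ q ∈ X, T = R.a q}), x = m R.Ω} := by
  let C := Subalgebra.centralizer ℂ (Set.centralizer {T | ∃ q ∈ X, T = R.a q})
  have hvec (ts : List E) (hts : ∀ t ∈ ts, t ∈ X) : ∃ m ∈ C, m R.Ω = R.vec ts := by
    induction ts with
    | nil => exact ⟨1, C.one_mem, rfl⟩
    | cons t ts ih =>
      rw [List.forall_mem_cons] at hts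
      obtain ⟨m, hm, hmΩ⟩ := ih hts.2
      exact ⟨R.a t * m, C.mul_mem (Set.subset_centralizer_centralizer ⟨t, hts.1, rfl⟩) hm,
        by rw [mul_apply_eq_comp, hmΩ, vec_cons]⟩
  have hspan : R.vecSpan {ts | ∀ t ∈ ts, t ∈ X} ≤
      C.toSubmodule.map (ContinuousLinearMap.apply ℂ F R.Ω : (F →L[ℂ] F) →ₗ[ℂ] F) :=
    Submodule.span_le.mpr fun _ ⟨ts, hts, hx⟩ => hx ▸ hvec ts hts
  refine hdense.mono fun x hx => ?_
  obtain ⟨m, hm, rfl⟩ := hspan hx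
  exact ⟨m, hm, rfl⟩

end CARFockRep

theorem vacuum_cyclic_and_separating_iff_dense_general
    {E : Type*} [NormedAddCommGroup E] [InnerProductSpace ℂ E] [CompleteSpace E]
    {F : Type*} [NormedAddCommGroup F] [InnerProductSpace ℂ F] [CompleteSpace F]
    (Γ : E → E)
    (hΓ_add : ∀ x y, Γ (x + y) = Γ x + Γ y)
    (hΓ_inner : ∀ f h : E, ⟪Γ f, Γ h⟫ = ⟪h, f⟫)
    (hΓ_inv : ∀ x, Γ (Γ x) = x)
    (P : E →L[ℂ] E) (hP_proj : P ∘L P = P) (hP_sa : IsSelfAdjoint P)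
    (hP_basis : ∀ x, P x + Γ (P (Γ x)) = x)
    -- the Fock representation `f ↦ a(f)` of `CAR(𝔥,Γ)` on `F` with vacuum `Ω`
    (a : E → (F →L[ℂ] F)) (Ω : F)
    (ha_add : ∀ f g, a (f + g) = a f + a g)
    (ha_star : ∀ f, ContinuousLinearMap.adjoint (a f) = a (Γ f))
    (hCAR : ∀ f h : E, a f ∘L ContinuousLinearMap.adjoint (a h)
      + ContinuousLinearMap.adjoint (a h) ∘L a f = (⟪f, h⟫ : ℂ) • (1 : F →L[ℂ] F))
    -- Fock state condition: `a(f) Ω = 0` whenever `P f = f`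
    (hvac : ∀ f : E, P f = f → a f Ω = 0)
    -- `Ω` is cyclic for the whole CAR algebra
    (hcyc : ∀ K : Submodule ℂ F, IsClosed (K : Set F) → Ω ∈ K →
      (∀ f : E, ∀ x ∈ K, a f x ∈ K) → K = ⊤)
    -- the closed `Γ`-invariant subspace `𝔮`, in generic position with `𝔭 = ran P`
    (𝔮 : Submodule ℂ E) (h𝔮_closed : IsClosed (𝔮 : Set E))
    (h𝔮Γ : ∀ q ∈ 𝔮, Γ q ∈ 𝔮)
    (hgen1 : LinearMap.range (P : E →ₗ[ℂ] E) ⊓ 𝔮 = ⊥)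
    (hgen2 : LinearMap.range (P : E →ₗ[ℂ] E) ⊓ 𝔮ᗮ = ⊥) :
    -- `Ω` cyclic for `M(𝔮)` iff `P𝔮` dense in `𝔭`
    ((Dense {x : F | ∃ m ∈ Set.centralizer (Set.centralizer {T : F →L[ℂ] F | ∃ q ∈ 𝔮, T = a q}),
        x = m Ω}) ↔ closure (P '' (𝔮 : Set E)) = (LinearMap.range (P : E →ₗ[ℂ] E) : Set E)) ∧
    -- `Ω` separating for `M(𝔮)` iff `P𝔮ᗮ` dense in `𝔭`
    ((∀ m ∈ Set.centralizer (Set.centralizer {T : F →L[ℂ] F | ∃ q ∈ 𝔮, T = a q}),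
        m Ω = 0 → m = 0) ↔ closure (P '' (𝔮ᗮ : Set E)) = (LinearMap.range (P : E →ₗ[ℂ] E) : Set E)) := by
  let R : CARFockRep E F :=
    ⟨Γ, P, a, Ω, hΓ_add, hΓ_inner, hΓ_inv, hP_proj, hP_basis, ha_add, ha_star, hCAR, hvac, hcyc⟩
  have : CompleteSpace 𝔮 := h𝔮_closed.completeSpace_coe
  have hP𝔮 := closure_image_eq_range_of_range_inf_orthogonal_eq_bot hP_proj hP_sa hgen2
  have hP𝔮_orth := closure_image_eq_range_of_range_inf_orthogonal_eq_bot hP_proj hP_sa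
    (𝔮.orthogonal_orthogonal.symm ▸ hgen1)
  have hW𝔮_orth := R.dense_vecSpan (fun _ => R.Γ_mem_orthogonal h𝔮Γ) hP𝔮_orth.ge
  exact ⟨iff_of_true (R.dense_vacuum_orbit (R.dense_vecSpan h𝔮Γ hP𝔮.ge)) hP𝔮,
    iff_of_true (fun _ hm => R.vacuum_separating h𝔮Γ hW𝔮_orth hm) hP𝔮_orth⟩

/-- Proposition 3.2 (`Teo.3.2`): in a Fock representation of `CAR(𝔥, Γ)` determined by the
basis projection `P` (with `𝔭` and `𝔮` in generic position), the Fock vacuum `Ω` is cyclic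
for the von Neumann algebra `M(𝔮) = {a(q) : q ∈ 𝔮}''` iff `P𝔮` is dense in `𝔭`, and `Ω` is
separating for `M(𝔮)` iff `P𝔮ᗮ` is dense in `𝔭`. -/
theorem vacuum_cyclic_and_separating_iff_dense
    {E : Type*} [NormedAddCommGroup E] [InnerProductSpace ℂ E] [CompleteSpace E]
    {F : Type*} [NormedAddCommGroup F] [InnerProductSpace ℂ F] [CompleteSpace F]
    (Γ : E → E)
    (hΓ_add : ∀ x y, Γ (x + y) = Γ x + Γ y)
    (hΓ_smul : ∀ (c : ℂ) (x : E), Γ (c • x) = (starRingEnd ℂ) c • Γ x)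
    (hΓ_inner : ∀ f h : E, ⟪Γ f, Γ h⟫ = ⟪h, f⟫)
    (hΓ_inv : ∀ x, Γ (Γ x) = x)
    (P : E →L[ℂ] E) (hP_proj : P ∘L P = P) (hP_sa : IsSelfAdjoint P)
    (hP_basis : ∀ x, P x + Γ (P (Γ x)) = x)
    -- the Fock representation `f ↦ a(f)` of `CAR(𝔥,Γ)` on `F` with vacuum `Ω`
    (a : E → (F →L[ℂ] F)) (Ω : F) (hΩ : ‖Ω‖ = 1)
    (ha_add : ∀ f g, a (f + g) = a f + a g)
    (ha_smul : ∀ (c : ℂ) (f : E), a (c • f) = (starRingEnd ℂ) c • a f)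
    (ha_star : ∀ f, ContinuousLinearMap.adjoint (a f) = a (Γ f))
    (hCAR : ∀ f h : E, a f ∘L ContinuousLinearMap.adjoint (a h)
      + ContinuousLinearMap.adjoint (a h) ∘L a f = (⟪f, h⟫ : ℂ) • (1 : F →L[ℂ] F))
    -- Fock state condition: `a(f) Ω = 0` whenever `P f = f`
    (hvac : ∀ f : E, P f = f → a f Ω = 0)
    -- `Ω` is cyclic for the whole CAR algebra
    (hcyc : ∀ K : Submodule ℂ F, IsClosed (K : Set F) → Ω ∈ K →
      (∀ f : E, ∀ x ∈ K, a f x ∈ K) → K = ⊤)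
    -- the closed `Γ`-invariant subspace `𝔮`, in generic position with `𝔭 = ran P`
    (𝔮 : Submodule ℂ E) (h𝔮_closed : IsClosed (𝔮 : Set E))
    (h𝔮Γ : ∀ q ∈ 𝔮, Γ q ∈ 𝔮)
    (hgen1 : LinearMap.range (P : E →ₗ[ℂ] E) ⊓ 𝔮 = ⊥)
    (hgen2 : LinearMap.range (P : E →ₗ[ℂ] E) ⊓ 𝔮ᗮ = ⊥)
    (hgen3 : (LinearMap.range (P : E →ₗ[ℂ] E))ᗮ ⊓ 𝔮 = ⊥)
    (hgen4 : (LinearMap.range (P : E →ₗ[ℂ] E))ᗮ ⊓ 𝔮ᗮ = ⊥) :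
    -- `Ω` cyclic for `M(𝔮)` iff `P𝔮` dense in `𝔭`
    ((Dense {x : F | ∃ m ∈ Set.centralizer (Set.centralizer {T : F →L[ℂ] F | ∃ q ∈ 𝔮, T = a q}),
        x = m Ω}) ↔ closure (P '' (𝔮 : Set E)) = (LinearMap.range (P : E →ₗ[ℂ] E) : Set E)) ∧
    -- `Ω` separating for `M(𝔮)` iff `P𝔮ᗮ` dense in `𝔭`
    ((∀ m ∈ Set.centralizer (Set.centralizer {T : F →L[ℂ] F | ∃ q ∈ 𝔮, T = a q}),
        m Ω = 0 → m = 0) ↔ closure (P '' (𝔮ᗮ : Set E)) = (LinearMap.range (P : E →ₗ[ℂ] E) : Set E)) :=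
  vacuum_cyclic_and_separating_iff_dense_general Γ hΓ_add hΓ_inner hΓ_inv P hP_proj hP_sa hP_basis a
    Ω ha_add ha_star hCAR hvac hcyc 𝔮 h𝔮_closed h𝔮Γ hgen1 hgen2
end

section
/- Let Γ be an anti-unitary involution on 𝔥, P a basis projection, 𝔮 a closed Γ-invariant subspace with P𝔮 and P(𝔮^⊥) dense in 𝔭 = P𝔥, and let S, T be the Tomita operators of (M(𝔮), Ω) and (M(𝔮^⊥), Ω) respectively in the Fock representation. Then for q ∈ 𝔮 and q^⊥ ∈ 𝔮^⊥: S(Pq) = PΓq and T(Pq^⊥) = PΓq^⊥ = −S*(Pq^⊥). -/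
/-!
Part (i) and the first half of (ii) hold already before taking closures: `a(Γq) ∈ M(𝔮)`
has adjoint `a(q)`. For `−S*(Pq⊥) = PΓq⊥`, twist `a(Γq⊥)` by the grading `U` (`+1` on even,
`−1` on odd particle number): since `⟪q, q⊥⟫ = 0`, the CAR make `a(Γq⊥)` anticommute with
`M(𝔮)`, so `a(Γq⊥) U` lies in the commutant `M(𝔮)'` and commutes with every `m ∈ M(𝔮)`.

The grading is built abstractly as `P_even − P_odd`, for the closed spans of even and odd words
applied to `Ω`. They are orthogonal because odd vacuum expectations vanish (split each
`a(f)` into an annihilator plus a creator and anticommute the annihilator onto `Ω`, which only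
leaves shorter odd words), and they span a dense subspace because `Ω` is cyclic.
-/

open Submodule
open scoped ComplexInnerProductSpace

section Words

variable {𝕜 A ι : Type*} [CommRing 𝕜] [Ring A] [Algebra 𝕜 A]

variable (𝕜) in
/-- The span of the words `a i₁ ⋯ a iₘ` of length `m = n - 1` (none for `n = 0`). -/
def shorterWordSpan (a : ι → A) (n : ℕ) : Submodule 𝕜 A :=
  span 𝕜 {x | ∃ M : List ι, M.length + 1 = n ∧ (M.map a).prod = x}

theorem mul_mem_shorterWordSpan_succ {a : ι → A} {n : ℕ} (i : ι) {x : A}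
    (hx : x ∈ shorterWordSpan 𝕜 a n) : a i * x ∈ shorterWordSpan 𝕜 a (n + 1) := by
  refine (span_le (p := (shorterWordSpan 𝕜 a (n + 1)).comap (LinearMap.mulLeft 𝕜 (a i)))).mpr
    ?_ hx
  rintro _ ⟨M, rfl, rfl⟩
  exact subset_span ⟨i :: M, rfl, by simp⟩

theorem prod_mem_shorterWordSpan_succ (a : ι → A) (L : List ι) :
    (L.map a).prod ∈ shorterWordSpan 𝕜 a (L.length + 1) :=
  subset_span ⟨L, rfl, rfl⟩

theorem mul_prod_sub_prod_mul_mem_shorterWordSpan {a : ι → A} {b : ι → ι → 𝕜}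
    (hb : ∀ i j, a i * a j + a j * a i = algebraMap 𝕜 A (b i j)) (i : ι) :
    ∀ L : List ι, a i * (L.map a).prod - (-1 : 𝕜) ^ L.length • ((L.map a).prod * a i)
      ∈ shorterWordSpan 𝕜 a L.length
  | [] => by simp
  | j :: L => by
    have hij : a i * a j = algebraMap 𝕜 A (b i j) - a j * a i := eq_sub_of_add_eq (hb i j)
    have key : a i * ((j :: L).map a).prod - (-1 : 𝕜) ^ (j :: L).length •
        (((j :: L).map a).prod * a i)
        = b i j • (L.map a).prod
          - a j * (a i * (L.map a).prod - (-1 : 𝕜) ^ L.length • ((L.map a).prod * a i)) := by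
      simp only [List.map_cons, List.prod_cons, List.length_cons, ← mul_assoc, hij,
        Algebra.algebraMap_eq_smul_one, sub_mul, smul_mul_assoc, one_mul, mul_sub,
        mul_smul_comm, pow_succ]
      simp only [mul_assoc]
      module
    rw [key]
    exact sub_mem (smul_mem _ _ (prod_mem_shorterWordSpan_succ a L))
      (mul_mem_shorterWordSpan_succ j (mul_prod_sub_prod_mul_mem_shorterWordSpan hb i L))

theorem map_prod_eq_zero_of_odd_length {a : ι → A} {b : ι → ι → 𝕜}
    (hb : ∀ i j, a i * a j + a j * a i = algebraMap 𝕜 A (b i j)) (φ : A →ₗ[𝕜] 𝕜)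
    (hsplit : ∀ i, ∃ j k, a i = a j + a k ∧ (∀ x, φ (x * a j) = 0) ∧
      ∀ x, φ (a k * x) = 0)
    (L : List ι) (hL : Odd L.length) : φ (L.map a).prod = 0 := by
  induction hn : L.length using Nat.strong_induction_on generalizing L with
  | _ n ih =>
  obtain _ | ⟨i, K⟩ := L
  · simp at hL
  obtain ⟨j, k, hi, hj, hk⟩ := hsplit i
  have hK : Even K.length := by simpa [Nat.odd_add_one] using hL
  have hshort : shorterWordSpan 𝕜 a K.length ≤ LinearMap.ker φ := by
    refine span_le.mpr ?_
    rintro _ ⟨M, hM, rfl⟩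
    refine ih M.length (by simp at hn; omega) M ?_ rfl
    rwa [← hM, Nat.even_add_one, Nat.not_even_iff_odd] at hK
  have hR := hshort (mul_prod_sub_prod_mul_mem_shorterWordSpan hb j K)
  rw [LinearMap.mem_ker, map_sub, map_smul, hj, smul_zero, sub_zero] at hR
  simp [hi, add_mul, hk, hR]

end Words

section Grading

variable {𝕜 F : Type*} [RCLike 𝕜] [NormedAddCommGroup F] [InnerProductSpace 𝕜 F]

noncomputable def gradingOp (K L : Submodule 𝕜 F) [K.HasOrthogonalProjection]
    [L.HasOrthogonalProjection] : F →L[𝕜] F :=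
  K.starProjection - L.starProjection

variable {K L : Submodule 𝕜 F} [K.HasOrthogonalProjection] [L.HasOrthogonalProjection]

theorem isSelfAdjoint_gradingOp [CompleteSpace F] : IsSelfAdjoint (gradingOp K L) :=
  (isSelfAdjoint_starProjection K).sub (isSelfAdjoint_starProjection L)

theorem gradingOp_apply_of_mem_left (hKL : K ⟂ L) {x : F} (hx : x ∈ K) :
    gradingOp K L x = x := by
  simp [gradingOp, starProjection_eq_self_iff.mpr hx,
    (starProjection_apply_eq_zero_iff L).mpr (hKL.le hx)]

theorem gradingOp_apply_of_mem_right (hKL : K ⟂ L) {x : F} (hx : x ∈ L) :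
    gradingOp K L x = -x := by
  simp [gradingOp, starProjection_eq_self_iff.mpr hx,
    (starProjection_apply_eq_zero_iff K).mpr (hKL.ge hx)]

theorem mul_gradingOp_eq_neg (hKL : K ⟂ L) (hdense : (K ⊔ L).topologicalClosure = ⊤)
    {T : F →L[𝕜] F} (hTK : Set.MapsTo T K L) (hTL : Set.MapsTo T L K) :
    T * gradingOp K L = -(gradingOp K L * T) := by
  refine ContinuousLinearMap.ext_on (s := (K : Set F) ∪ L) ?_ ?_
  · rw [span_union, span_eq, span_eq, dense_iff_topologicalClosure_eq_top]
    exact hdense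
  · rintro x (hx | hx)
    · simp [gradingOp_apply_of_mem_left hKL hx,
        gradingOp_apply_of_mem_right hKL (hTK hx)]
    · simp [gradingOp_apply_of_mem_right hKL hx,
        gradingOp_apply_of_mem_left hKL (hTL hx)]

end Grading

section WordVectors

variable {𝕜 F ι : Type*} [RCLike 𝕜] [NormedAddCommGroup F] [InnerProductSpace 𝕜 F]

theorem Submodule.apply_mem_topologicalClosure {M N : Submodule 𝕜 F} {T : F →L[𝕜] F}
    (hT : ∀ x ∈ M, T x ∈ N) {x : F} (hx : x ∈ M.topologicalClosure) :
    T x ∈ N.topologicalClosure :=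
  topologicalClosure_minimal M (t := N.topologicalClosure.comap (T : F →ₗ[𝕜] F))
    (fun y hy => le_topologicalClosure N (hT y hy))
    (N.isClosed_topologicalClosure.preimage T.continuous) hx

def wordVectors (a : ι → F →L[𝕜] F) (Ω : F) (p : ℕ → Prop) : Submodule 𝕜 F :=
  (span 𝕜 {x | ∃ L : List ι, p L.length ∧ (L.map a).prod Ω = x}).topologicalClosure

variable {a : ι → F →L[𝕜] F} {Ω : F}

theorem prod_apply_mem_wordVectors {p : ℕ → Prop} {L : List ι} (hL : p L.length) :
    (L.map a).prod Ω ∈ wordVectors a Ω p :=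
  le_topologicalClosure _ (subset_span ⟨L, hL, rfl⟩)

theorem mapsTo_wordVectors {p q : ℕ → Prop} (hpq : ∀ n, p n → q (n + 1)) (i : ι) :
    Set.MapsTo (a i) (wordVectors a Ω p) (wordVectors a Ω q) := by
  intro x hx
  refine apply_mem_topologicalClosure (fun y hy => ?_) hx
  refine (span_le (p := (span 𝕜 _).comap (a i : F →ₗ[𝕜] F))).mpr ?_ hy
  rintro _ ⟨L, hL, rfl⟩
  exact subset_span ⟨i :: L, hpq _ hL, by simp⟩

instance [CompleteSpace F] (p : ℕ → Prop) : CompleteSpace (wordVectors a Ω p) :=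
  (isClosed_topologicalClosure _).completeSpace_coe

theorem wordVectors_even_isOrtho_odd
    (horth : ∀ L M : List ι, Even L.length → Odd M.length →
      inner 𝕜 ((L.map a).prod Ω) ((M.map a).prod Ω) = 0) :
    wordVectors a Ω Even ⟂ wordVectors a Ω Odd := by
  rw [isOrtho_iff_le, wordVectors, wordVectors, orthogonal_closure]
  refine topologicalClosure_minimal _ (isOrtho_span.mpr ?_).le (isClosed_orthogonal _)
  rintro _ ⟨L, hL, rfl⟩ _ ⟨M, hM, rfl⟩
  exact horth L M hL hM

theorem topologicalClosure_wordVectors_even_sup_odd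
    (hcyc : ∀ K : Submodule 𝕜 F, IsClosed (K : Set F) → Ω ∈ K →
      (∀ i, ∀ x ∈ K, a i x ∈ K) → K = ⊤) :
    (wordVectors a Ω Even ⊔ wordVectors a Ω Odd).topologicalClosure = ⊤ := by
  refine hcyc _ (isClosed_topologicalClosure _)
    (le_topologicalClosure _ (mem_sup_left (prod_apply_mem_wordVectors (L := []) Even.zero)))
    fun i x hx => apply_mem_topologicalClosure (fun y hy => ?_) hx
  obtain ⟨u, hu, v, hv, rfl⟩ := mem_sup.mp hy
  rw [map_add]
  exact add_mem (mem_sup_right (mapsTo_wordVectors (p := Even) (fun _ hn => hn.add_one) i hu))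
    (mem_sup_left (mapsTo_wordVectors (p := Odd) (fun _ hn => hn.add_one) i hv))

theorem adjoint_list_prod_map [CompleteSpace F] {σ : ι → ι}
    (ha_star : ∀ i, (a i).adjoint = a (σ i)) (L : List ι) :
    (L.map a).prod.adjoint = ((L.map σ).reverse.map a).prod := by
  rw [← ContinuousLinearMap.star_eq_adjoint, ← MulOpposite.unop_op (star _),
    ← starMulEquiv_apply, unop_map_list_prod]
  simp [Function.comp_def, ContinuousLinearMap.star_eq_adjoint, ha_star, List.map_reverse]

theorem inner_prod_apply_eq_zero_of_odd [CompleteSpace F] {σ : ι → ι}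
    (ha_star : ∀ i, (a i).adjoint = a (σ i))
    (hvac_odd : ∀ N : List ι, Odd N.length → inner 𝕜 Ω ((N.map a).prod Ω) = 0)
    (L M : List ι) (hLM : Odd (L.length + M.length)) :
    inner 𝕜 ((L.map a).prod Ω) ((M.map a).prod Ω) = 0 := by
  rw [← ContinuousLinearMap.adjoint_inner_right, adjoint_list_prod_map ha_star,
    ← mul_apply_eq_comp, ← List.prod_append, ← List.map_append]
  exact hvac_odd _ (by simpa using hLM)

theorem exists_isSelfAdjoint_anticommuting [CompleteSpace F]
    (hcyc : ∀ K : Submodule 𝕜 F, IsClosed (K : Set F) → Ω ∈ K →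
      (∀ i, ∀ x ∈ K, a i x ∈ K) → K = ⊤)
    (horth : ∀ L M : List ι, Even L.length → Odd M.length →
      inner 𝕜 ((L.map a).prod Ω) ((M.map a).prod Ω) = 0) :
    ∃ U : F →L[𝕜] F, IsSelfAdjoint U ∧ U Ω = Ω ∧ ∀ i, a i * U = -(U * a i) := by
  have hKL := wordVectors_even_isOrtho_odd horth
  refine ⟨gradingOp _ _, isSelfAdjoint_gradingOp,
    gradingOp_apply_of_mem_left hKL (prod_apply_mem_wordVectors (L := []) Even.zero),
    fun i => mul_gradingOp_eq_neg hKL (topologicalClosure_wordVectors_even_sup_odd hcyc)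
      (mapsTo_wordVectors (fun _ hn => Even.add_one hn) i)
      (mapsTo_wordVectors (fun _ hn => Odd.add_one hn) i)⟩

end WordVectors

theorem mul_mem_centralizer_of_anticommute {R : Type*} [Ring R] {S : Set R} {x u : R}
    (hx : ∀ s ∈ S, s * x = -(x * s)) (hu : ∀ s ∈ S, s * u = -(u * s)) :
    x * u ∈ S.centralizer := fun s hs => by
  rw [← mul_assoc, hx s hs, neg_mul, mul_assoc, hu s hs, mul_neg, neg_neg, mul_assoc]

section Commutant

variable {𝕜 F : Type*} [RCLike 𝕜] [NormedAddCommGroup F] [InnerProductSpace 𝕜 F]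
  [CompleteSpace F] {S : Set (F →L[𝕜] F)}

theorem mem_closure_graph_of_mem (Ω : F) {x : F →L[𝕜] F} (hx : x ∈ S) :
    (x Ω, x.adjoint Ω) ∈ closure
      {z : F × F | ∃ m ∈ S.centralizer.centralizer, z = (m Ω, m.adjoint Ω)} :=
  subset_closure ⟨x, Set.subset_centralizer_centralizer hx, rfl⟩

theorem inner_adjoint_apply_eq_of_mem_centralizer (Ω : F) {z m : F →L[𝕜] F}
    (hz : z ∈ S.centralizer) (hm : m ∈ S.centralizer.centralizer) :
    inner 𝕜 (z.adjoint Ω) (m Ω) = inner 𝕜 (m.adjoint Ω) (z Ω) := by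
  rw [ContinuousLinearMap.adjoint_inner_left, ContinuousLinearMap.adjoint_inner_left,
    ← mul_apply_eq_comp, hm z hz, mul_apply_eq_comp]

end Commutant

section CAR

variable {E F : Type*} [NormedAddCommGroup E] [InnerProductSpace ℂ E]
  [NormedAddCommGroup F] [InnerProductSpace ℂ F] [CompleteSpace F]
  {Γ : E → E} {a : E → F →L[ℂ] F}

theorem Submodule.mapsTo_orthogonal_of_antiunitary
    (hΓ_inner : ∀ f h : E, ⟪Γ f, Γ h⟫ = ⟪h, f⟫) (hΓ_inv : ∀ x, Γ (Γ x) = x)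
    {V : Submodule ℂ E} (hV : Set.MapsTo Γ V V) :
    Set.MapsTo Γ Vᗮ Vᗮ := fun q hq u hu => by
  rw [← hΓ_inv u, hΓ_inner, inner_eq_zero_symm]
  exact hq (Γ u) (hV hu)

theorem anticommutator_eq_of_car (hΓ_inv : ∀ x, Γ (Γ x) = x)
    (ha_star : ∀ f, (a f).adjoint = a (Γ f))
    (hCAR : ∀ f h : E,
      a f ∘L (a h).adjoint + (a h).adjoint ∘L a f = (⟪f, h⟫ : ℂ) • (1 : F →L[ℂ] F))
    (f h : E) : a f * a h + a h * a f = algebraMap ℂ (F →L[ℂ] F) ⟪f, Γ h⟫ := by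
  have h_car := hCAR f (Γ h)
  rwa [ha_star, hΓ_inv, ← Algebra.algebraMap_eq_smul_one] at h_car

variable {P : E →L[ℂ] E} {Ω : F}

theorem inner_vacuum_prod_apply_eq_zero_of_odd (hΓ_inv : ∀ x, Γ (Γ x) = x)
    (hP_proj : P ∘L P = P) (hP_basis : ∀ x, P x + Γ (P (Γ x)) = x)
    (ha_add : ∀ f g, a (f + g) = a f + a g) (ha_star : ∀ f, (a f).adjoint = a (Γ f))
    (hCAR : ∀ f h : E,
      a f ∘L (a h).adjoint + (a h).adjoint ∘L a f = (⟪f, h⟫ : ℂ) • (1 : F →L[ℂ] F))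
    (hvac : ∀ f : E, P f = f → a f Ω = 0) (L : List E) (hL : Odd L.length) :
    ⟪Ω, (L.map a).prod Ω⟫ = 0 := by
  have hPP (f : E) : P (P f) = P f := congrArg (· f) hP_proj
  refine map_prod_eq_zero_of_odd_length (anticommutator_eq_of_car hΓ_inv ha_star hCAR)
    (innerSL ℂ Ω ∘L ContinuousLinearMap.apply ℂ F Ω : (F →L[ℂ] F) →L[ℂ] ℂ)
    (fun f => ⟨P f, Γ (P (Γ f)), by rw [← ha_add, hP_basis], fun x => ?_, fun x => ?_⟩) L hL
  · simp [hvac _ (hPP f)]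
  · simp [← ContinuousLinearMap.adjoint_inner_left, ha_star, hΓ_inv, hvac _ (hPP _)]

end CAR

/-- `S` is encoded by its graph, the closure of `{(MΩ, M*Ω) : M ∈ M(𝔮)}`, and `S*` by
`⟪S*x, MΩ⟫ = ⟪M*Ω, x⟫`; the one-particle vector `Pf` is `a(Γf)Ω`. -/
theorem tomita_operator_one_particle_general
    {E : Type*} [NormedAddCommGroup E] [InnerProductSpace ℂ E]
    {F : Type*} [NormedAddCommGroup F] [InnerProductSpace ℂ F] [CompleteSpace F]
    (Γ : E → E)
    (hΓ_inner : ∀ f h : E, ⟪Γ f, Γ h⟫ = ⟪h, f⟫)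
    (hΓ_inv : ∀ x, Γ (Γ x) = x)
    (P : E →L[ℂ] E) (hP_proj : P ∘L P = P)
    (hP_basis : ∀ x, P x + Γ (P (Γ x)) = x)
    -- the Fock representation `f ↦ a(f)` of `CAR(𝔥,Γ)` on `F` with vacuum `Ω`
    (a : E → (F →L[ℂ] F)) (Ω : F)
    (ha_add : ∀ f g, a (f + g) = a f + a g)
    (ha_star : ∀ f, ContinuousLinearMap.adjoint (a f) = a (Γ f))
    (hCAR : ∀ f h : E, a f ∘L ContinuousLinearMap.adjoint (a h)
      + ContinuousLinearMap.adjoint (a h) ∘L a f = (⟪f, h⟫ : ℂ) • (1 : F →L[ℂ] F))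
    (hvac : ∀ f : E, P f = f → a f Ω = 0)
    (hcyc : ∀ K : Submodule ℂ F, IsClosed (K : Set F) → Ω ∈ K →
      (∀ f : E, ∀ x ∈ K, a f x ∈ K) → K = ⊤)
    -- the closed `Γ`-invariant subspace `𝔮`, with `P𝔮` and `P𝔮ᗮ` dense in `𝔭`
    (𝔮 : Submodule ℂ E)
    (h𝔮Γ : ∀ q ∈ 𝔮, Γ q ∈ 𝔮) :
    -- (i)  S(Pq) = PΓq  (with `Pq = a(Γq)Ω` and `PΓq = a(q)Ω` as vectors of `F`)
    (∀ q ∈ 𝔮, (a (Γ q) Ω, a q Ω) ∈ closure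
      {z : F × F | ∃ m ∈ Set.centralizer (Set.centralizer
          {T : F →L[ℂ] F | ∃ q' ∈ 𝔮, T = a q'}),
        z = (m Ω, (ContinuousLinearMap.adjoint m) Ω)}) ∧
    -- (ii)  T(Pq⊥) = PΓq⊥ …
    (∀ q' ∈ 𝔮ᗮ, (a (Γ q') Ω, a q' Ω) ∈ closure
      {z : F × F | ∃ m ∈ Set.centralizer (Set.centralizer
          {T : F →L[ℂ] F | ∃ q'' ∈ 𝔮ᗮ, T = a q''}),
        z = (m Ω, (ContinuousLinearMap.adjoint m) Ω)}) ∧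
    -- … and  −S*(Pq⊥) = PΓq⊥, i.e. (Pq⊥, −PΓq⊥) belongs to the graph of `S*`
    (∀ q' ∈ 𝔮ᗮ, ∀ m ∈ Set.centralizer (Set.centralizer
          {T : F →L[ℂ] F | ∃ q'' ∈ 𝔮, T = a q''}),
      ⟪-(a q' Ω), m Ω⟫ = ⟪(ContinuousLinearMap.adjoint m) Ω, a (Γ q') Ω⟫) := by
  have hgraph {V : Submodule ℂ E} (hV : Set.MapsTo Γ V V) {q : E} (hq : q ∈ V) :
      (a (Γ q) Ω, a q Ω) ∈ closure {z : F × F | ∃ m ∈ Set.centralizer (Set.centralizer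
        {T : F →L[ℂ] F | ∃ q' ∈ V, T = a q'}), z = (m Ω, m.adjoint Ω)} := by
    simpa [ha_star, hΓ_inv] using
      mem_closure_graph_of_mem Ω (S := {T | ∃ q' ∈ V, T = a q'}) ⟨Γ q, hV hq, rfl⟩
  have hanti := anticommutator_eq_of_car hΓ_inv ha_star hCAR
  obtain ⟨U, hU_sa, hUΩ, hU⟩ := exists_isSelfAdjoint_anticommuting hcyc
    fun L M hL hM => inner_prod_apply_eq_zero_of_odd ha_star
      (inner_vacuum_prod_apply_eq_zero_of_odd hΓ_inv hP_proj hP_basis ha_add ha_star hCAR hvac)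
      L M (hL.add_odd hM)
  refine ⟨fun q hq => hgraph h𝔮Γ hq,
    fun q hq => hgraph (mapsTo_orthogonal_of_antiunitary hΓ_inner hΓ_inv h𝔮Γ) hq,
    fun q hq m hm => ?_⟩
  have hz : a (Γ q) * U ∈ Set.centralizer {T | ∃ q' ∈ 𝔮, T = a q'} := by
    refine mul_mem_centralizer_of_anticommute ?_ ?_ <;> rintro _ ⟨q', hq', rfl⟩
    · rw [← add_eq_zero_iff_eq_neg, hanti, hΓ_inv, hq q' hq', map_zero]
    · exact hU q'
  have hz_adj : (a (Γ q) * U).adjoint Ω = -(a q Ω) := by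
    rw [← ContinuousLinearMap.star_eq_adjoint, star_mul, hU_sa.star_eq,
      ContinuousLinearMap.star_eq_adjoint, ha_star, hΓ_inv, ← neg_neg (U * a q), ← hU q]
    simp [hUΩ]
  simpa [hz_adj, mul_apply_eq_comp, hUΩ] using
    inner_adjoint_apply_eq_of_mem_centralizer Ω hz hm

/-- Lemma 3.3 (`Lem.3.3`): let `S`, `T` be the Tomita operators of `(M(𝔮), Ω)` and
`(M(𝔮ᗮ), Ω)` respectively. Then for `q ∈ 𝔮` and `q⊥ ∈ 𝔮ᗮ`:
(i) `S(Pq) = PΓq`; (ii) `T(Pq⊥) = PΓq⊥ = −S*(Pq⊥)`.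
Here the one-particle vector `Pf ∈ F` is realized as `a(Γf)Ω` (indeed `a(f)Ω = PΓf`),
`S` is the closure of `MΩ ↦ M*Ω` (`M ∈ M(𝔮)`), so its graph is the closure of
`{(MΩ, M*Ω) : M ∈ M(𝔮)}`, and the anti-linear adjoint `S*` satisfies
`⟪S*x, MΩ⟫ = ⟪M*Ω, x⟫`. -/
theorem tomita_operator_one_particle
    {E : Type*} [NormedAddCommGroup E] [InnerProductSpace ℂ E] [CompleteSpace E]
    {F : Type*} [NormedAddCommGroup F] [InnerProductSpace ℂ F] [CompleteSpace F]
    (Γ : E → E)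
    (hΓ_add : ∀ x y, Γ (x + y) = Γ x + Γ y)
    (hΓ_smul : ∀ (c : ℂ) (x : E), Γ (c • x) = (starRingEnd ℂ) c • Γ x)
    (hΓ_inner : ∀ f h : E, ⟪Γ f, Γ h⟫ = ⟪h, f⟫)
    (hΓ_inv : ∀ x, Γ (Γ x) = x)
    (P : E →L[ℂ] E) (hP_proj : P ∘L P = P) (hP_sa : IsSelfAdjoint P)
    (hP_basis : ∀ x, P x + Γ (P (Γ x)) = x)
    -- the Fock representation `f ↦ a(f)` of `CAR(𝔥,Γ)` on `F` with vacuum `Ω`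
    (a : E → (F →L[ℂ] F)) (Ω : F) (hΩ : ‖Ω‖ = 1)
    (ha_add : ∀ f g, a (f + g) = a f + a g)
    (ha_smul : ∀ (c : ℂ) (f : E), a (c • f) = (starRingEnd ℂ) c • a f)
    (ha_star : ∀ f, ContinuousLinearMap.adjoint (a f) = a (Γ f))
    (hCAR : ∀ f h : E, a f ∘L ContinuousLinearMap.adjoint (a h)
      + ContinuousLinearMap.adjoint (a h) ∘L a f = (⟪f, h⟫ : ℂ) • (1 : F →L[ℂ] F))
    (hvac : ∀ f : E, P f = f → a f Ω = 0)
    (hcyc : ∀ K : Submodule ℂ F, IsClosed (K : Set F) → Ω ∈ K →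
      (∀ f : E, ∀ x ∈ K, a f x ∈ K) → K = ⊤)
    -- the closed `Γ`-invariant subspace `𝔮`, with `P𝔮` and `P𝔮ᗮ` dense in `𝔭`
    (𝔮 : Submodule ℂ E) (h𝔮_closed : IsClosed (𝔮 : Set E))
    (h𝔮Γ : ∀ q ∈ 𝔮, Γ q ∈ 𝔮)
    (hdense1 : closure (P '' (𝔮 : Set E)) = (LinearMap.range (P : E →ₗ[ℂ] E) : Set E))
    (hdense2 : closure (P '' (𝔮ᗮ : Set E)) = (LinearMap.range (P : E →ₗ[ℂ] E) : Set E)) :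
    -- (i)  S(Pq) = PΓq  (with `Pq = a(Γq)Ω` and `PΓq = a(q)Ω` as vectors of `F`)
    (∀ q ∈ 𝔮, (a (Γ q) Ω, a q Ω) ∈ closure
      {z : F × F | ∃ m ∈ Set.centralizer (Set.centralizer
          {T : F →L[ℂ] F | ∃ q' ∈ 𝔮, T = a q'}),
        z = (m Ω, (ContinuousLinearMap.adjoint m) Ω)}) ∧
    -- (ii)  T(Pq⊥) = PΓq⊥ …
    (∀ q' ∈ 𝔮ᗮ, (a (Γ q') Ω, a q' Ω) ∈ closure
      {z : F × F | ∃ m ∈ Set.centralizer (Set.centralizer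
          {T : F →L[ℂ] F | ∃ q'' ∈ 𝔮ᗮ, T = a q''}),
        z = (m Ω, (ContinuousLinearMap.adjoint m) Ω)}) ∧
    -- … and  −S*(Pq⊥) = PΓq⊥, i.e. (Pq⊥, −PΓq⊥) belongs to the graph of `S*`
    (∀ q' ∈ 𝔮ᗮ, ∀ m ∈ Set.centralizer (Set.centralizer
          {T : F →L[ℂ] F | ∃ q'' ∈ 𝔮, T = a q''}),
      ⟪-(a q' Ω), m Ω⟫ = ⟪(ContinuousLinearMap.adjoint m) Ω, a (Γ q') Ω⟫) :=
  tomita_operator_one_particle_general Γ hΓ_inner hΓ_inv P hP_proj hP_basis a Ω ha_add ha_star hCAR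
    hvac hcyc 𝔮 h𝔮Γ
end
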